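/- arXiv:cs/9907032 — 12 statements merged into one kernel-verified Lean document; each statement's English description precedes it below -/
import Mathlib

section
/- Soundness of step resolution: for all PLTL formulae A, B, C, D and every proposition symbol p, the formula (□(C ⇒ ◯(A ∨ p)) ∧ □(D ⇒ ◯(B ∨ ¬p))) ⇒ □((C ∧ D) ⇒ ◯(A ∨ B)) is valid, and the formula (□(start ⇒ A ∨ p) ∧ □(start ⇒ B ∨ ¬p)) ⇒ □(start ⇒ A ∨ B) is valid. -/
/-- Syntax of Propositional Linear Temporal Logic over proposition symbols `P`. -/
inductive PLTL (P : Type) : Type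
  | tru : PLTL P
  | fls : PLTL P
  | start : PLTL P
  | atom : P → PLTL P
  | neg : PLTL P → PLTL P
  | conj : PLTL P → PLTL P → PLTL P
  | disj : PLTL P → PLTL P → PLTL P
  | impl : PLTL P → PLTL P → PLTL P
  | next : PLTL P → PLTL P
  | evtl : PLTL P → PLTL P
  | alw : PLTL P → PLTL P
  | untl : PLTL P → PLTL P → PLTL P
  | unls : PLTL P → PLTL P → PLTL P

namespace PLTL

/-- Satisfaction `(σ, i) ⊨ A` of a PLTL formula in a model `σ : ℕ → Set P` at index `i`. -/
def Sat {P : Type} (σ : ℕ → Set P) : PLTL P → ℕ → Prop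
  | tru, _ => True
  | fls, _ => False
  | start, i => i = 0
  | atom p, i => p ∈ σ i
  | neg A, i => ¬ Sat σ A i
  | conj A B, i => Sat σ A i ∧ Sat σ B i
  | disj A B, i => Sat σ A i ∨ Sat σ B i
  | impl A B, i => Sat σ A i → Sat σ B i
  | next A, i => Sat σ A (i + 1)
  | evtl A, i => ∃ k, i ≤ k ∧ Sat σ A k
  | alw A, i => ∀ j, i ≤ j → Sat σ A j
  | untl A B, i => ∃ k, i ≤ k ∧ Sat σ B k ∧ ∀ j, i ≤ j → j < k → Sat σ A j
  | unls A B, i =>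
      (∃ k, i ≤ k ∧ Sat σ B k ∧ ∀ j, i ≤ j → j < k → Sat σ A j) ∨ (∀ j, i ≤ j → Sat σ A j)

/-- A formula is valid iff it is satisfied at index 0 of every model. -/
def Valid {P : Type} (A : PLTL P) : Prop := ∀ σ : ℕ → Set P, Sat σ A 0

/-- A formula with no temporal connectives is propositionally valid iff
it is satisfied at every index of every model. -/
def PropValid {P : Type} (A : PLTL P) : Prop := ∀ (σ : ℕ → Set P) (i : ℕ), Sat σ A i

/-- A literal is a proposition symbol or a negated proposition symbol. -/
def IsLiteral {P : Type} : PLTL P → Prop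
  | atom _ => True
  | neg (atom _) => True
  | _ => False

/-- A conjunction of literals. -/
def IsConjLits {P : Type} : PLTL P → Prop
  | atom _ => True
  | neg (atom _) => True
  | conj A B => IsConjLits A ∧ IsConjLits B
  | _ => False

/-- Biconditional `A ⇔ B` as an abbreviation. -/
def piff {P : Type} (A B : PLTL P) : PLTL P := conj (impl A B) (impl B A)

/-- Finite disjunction. -/
def bigOr {P : Type} (l : List (PLTL P)) : PLTL P := l.foldr disj fls

/-- Finite conjunction. -/
def bigAnd {P : Type} (l : List (PLTL P)) : PLTL P := l.foldr conj tru

/-- The proposition symbols occurring in a formula. -/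
def syms {P : Type} : PLTL P → Set P
  | tru => ∅
  | fls => ∅
  | start => ∅
  | atom p => {p}
  | neg A => syms A
  | conj A B => syms A ∪ syms B
  | disj A B => syms A ∪ syms B
  | impl A B => syms A ∪ syms B
  | next A => syms A
  | evtl A => syms A
  | alw A => syms A
  | untl A B => syms A ∪ syms B
  | unls A B => syms A ∪ syms B

end PLTL

namespace PLTL

variable {P : Type} (σ : ℕ → Set P)

theorem sat_disj_resolve {A B : PLTL P} {p : P} {i : ℕ} (hA : Sat σ (disj A (atom p)) i)
    (hB : Sat σ (disj B (neg (atom p))) i) : Sat σ (disj A B) i := by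
  rcases hA with hA | hp
  · exact Or.inl hA
  · exact Or.inr (hB.resolve_right (not_not_intro hp))

theorem sat_step_resolution (A B C D : PLTL P) (p : P) (i : ℕ) :
    Sat σ (impl
      (conj (alw (impl C (next (disj A (atom p)))))
            (alw (impl D (next (disj B (neg (atom p)))))))
      (alw (impl (conj C D) (next (disj A B))))) i :=
  fun ⟨hAp, hBp⟩ j hj ⟨hC, hD⟩ => sat_disj_resolve σ (hAp j hj hC) (hBp j hj hD)

theorem sat_initial_resolution (A B : PLTL P) (p : P) (i : ℕ) :
    Sat σ (impl
      (conj (alw (impl start (disj A (atom p))))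
            (alw (impl start (disj B (neg (atom p))))))
      (alw (impl start (disj A B)))) i :=
  fun ⟨hAp, hBp⟩ j hj h0 => sat_disj_resolve σ (hAp j hj h0) (hBp j hj h0)

end PLTL

open PLTL in
theorem stmt_2_general {P : Type} (A B C D : PLTL P) (p : P) :
    Valid (impl
      (conj (alw (impl C (next (disj A (atom p)))))
            (alw (impl D (next (disj B (neg (atom p)))))))
      (alw (impl (conj C D) (next (disj A B))))) ∧
    Valid (impl
      (conj (alw (impl start (disj A (atom p))))
            (alw (impl start (disj B (neg (atom p))))))
      (alw (impl start (disj A B)))) :=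
  ⟨fun σ => sat_step_resolution σ A B C D p 0, fun σ => sat_initial_resolution σ A B p 0⟩

open PLTL in
/-- soundness of step resolution (the step case and the initial case). -/
theorem stmt_2 {P : Type} [Countable P] (A B C D : PLTL P) (p : P) :
    Valid (impl
      (conj (alw (impl C (next (disj A (atom p)))))
            (alw (impl D (next (disj B (neg (atom p)))))))
      (alw (impl (conj C D) (next (disj A B))))) ∧
    Valid (impl
      (conj (alw (impl start (disj A (atom p))))
            (alw (impl start (disj B (neg (atom p))))))
      (alw (impl start (disj A B)))) :=
  stmt_2_general A B C D p
end

section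
/- Soundness of the general temporal resolution rule: for all PLTL formulae A and C and every literal l, the formula (□(A ⇒ ◯□¬l) ∧ □(C ⇒ ◇l)) ⇒ □(C ⇒ ((¬A) W l)) is valid. -/
namespace PLTL

variable {P : Type} {σ : ℕ → Set P} {A B : PLTL P} {i : ℕ}

theorem sat_untl_neg_of_evtl
    (hA : ∀ j, i ≤ j → Sat σ A j → ∀ k, j + 1 ≤ k → ¬ Sat σ B k) (hB : Sat σ (evtl B) i) :
    Sat σ (untl (neg A) B) i := by
  obtain ⟨k, hik, hBk⟩ := hB
  exact ⟨k, hik, hBk, fun j hij hjk hAj => hA j hij hAj k hjk hBk⟩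

theorem sat_unls_of_untl (h : Sat σ (untl A B) i) : Sat σ (unls A B) i := Or.inl h

end PLTL

open PLTL in
theorem stmt_4_general {P : Type} (A C l : PLTL P) :
    Valid (impl
      (conj (alw (impl A (next (alw (neg l))))) (alw (impl C (evtl l))))
      (alw (impl C (unls (neg A) l)))) := by
  rintro σ ⟨hA, hC⟩ j - hCj
  exact sat_unls_of_untl <|
    sat_untl_neg_of_evtl (fun m _ hAm => hA m m.zero_le hAm) (hC j j.zero_le hCj)

open PLTL in
/-- soundness of the general temporal resolution rule:
(□(A ⇒ ◯□¬l) ∧ □(C ⇒ ◇l)) ⇒ □(C ⇒ ((¬A) W l)) is valid, for any literal l. -/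
theorem stmt_4 {P : Type} [Countable P] (A C l : PLTL P) (hl : IsLiteral l) :
    Valid (impl
      (conj (alw (impl A (next (alw (neg l))))) (alw (impl C (evtl l))))
      (alw (impl C (unls (neg A) l)))) :=
  stmt_4_general A C l
end

section
/- Loop formula lemma: let A_0,…,A_n and B_0,…,B_n be conjunctions of literals and l a literal such that, for every i with 0 ≤ i ≤ n, the propositional formulae B_i ⇒ ¬l and B_i ⇒ (A_0 ∨ … ∨ A_n) are valid. Then the formula □(⋀_{i=0}^{n} (A_i ⇒ ◯B_i)) ⇒ □((A_0 ∨ … ∨ A_n) ⇒ ◯□¬l) is valid. -/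
/-!
The disjunction `⋁ Aᵢ` is an invariant of every model of the rules: if `Aᵢ` holds at `t`,
the rule `Aᵢ ⇒ ◯Bᵢ` gives `Bᵢ` at `t + 1`, and `Bᵢ` implies both `¬l` and `⋁ Aⱼ` there.
Induction along the model then yields `¬l` at every later index.
-/

namespace PLTL

variable {P : Type} (σ : ℕ → Set P)

@[simp]
lemma sat_bigOr (L : List (PLTL P)) (i : ℕ) : Sat σ (bigOr L) i ↔ ∃ C ∈ L, Sat σ C i := by
  induction L with
  | nil => simp [bigOr, Sat]
  | cons C L ih => simp [bigOr, Sat, ← ih]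

@[simp]
lemma sat_bigAnd (L : List (PLTL P)) (i : ℕ) : Sat σ (bigAnd L) i ↔ ∀ C ∈ L, Sat σ C i := by
  induction L with
  | nil => simp [bigAnd, Sat]
  | cons C L ih => simp [bigAnd, Sat, ← ih]

lemma sat_bigOr_ofFn {m : ℕ} (A : Fin m → PLTL P) (i : ℕ) :
    Sat σ (bigOr (List.ofFn A)) i ↔ ∃ k, Sat σ (A k) i := by
  simp

lemma sat_bigAnd_ofFn {m : ℕ} (A : Fin m → PLTL P) (i : ℕ) :
    Sat σ (bigAnd (List.ofFn A)) i ↔ ∀ k, Sat σ (A k) i := by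
  simp

lemma sat_next_alw_of_invariant {Q R : PLTL P} {j : ℕ}
    (step : ∀ t, j ≤ t → Sat σ Q t → Sat σ Q (t + 1) ∧ Sat σ R (t + 1))
    (hQ : Sat σ Q j) : Sat σ (next (alw R)) j := by
  have invariant : ∀ t, j ≤ t → Sat σ Q t :=
    fun t ht => Nat.le_induction hQ (fun t ht hQt => (step t ht hQt).1) t ht
  intro k hk
  obtain ⟨t, rfl⟩ : ∃ t, k = t + 1 := ⟨k - 1, by omega⟩
  exact (step t (by omega) (invariant t (by omega))).2

end PLTL

open PLTL in
theorem stmt_5_general {P : Type} (n : ℕ) (A B : Fin (n + 1) → PLTL P) (l : PLTL P)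
    (h1 : ∀ i, PropValid (impl (B i) (neg l)))
    (h2 : ∀ i, PropValid (impl (B i) (bigOr (List.ofFn A)))) :
    Valid (impl
      (alw (bigAnd (List.ofFn fun i => impl (A i) (next (B i)))))
      (alw (impl (bigOr (List.ofFn A)) (next (alw (neg l)))))) := by
  intro σ hRules j _ hA
  refine sat_next_alw_of_invariant σ (fun t _ hAt => ?_) hA
  obtain ⟨i, hAi⟩ := (sat_bigOr_ofFn σ A t).1 hAt
  have hBi : Sat σ (B i) (t + 1) :=
    (sat_bigAnd_ofFn σ _ t).1 (hRules t (Nat.zero_le t)) i hAi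
  exact ⟨h2 i σ _ hBi, h1 i σ _ hBi⟩

open PLTL in
/-- loop formula lemma. If each Bᵢ propositionally implies ¬l and the
disjunction of the Aⱼ's, then □(⋀ᵢ (Aᵢ ⇒ ◯Bᵢ)) ⇒ □((⋁ᵢ Aᵢ) ⇒ ◯□¬l) is valid. -/
theorem stmt_5 {P : Type} [Countable P] (n : ℕ) (A B : Fin (n + 1) → PLTL P) (l : PLTL P)
    (hA : ∀ i, IsConjLits (A i)) (hB : ∀ i, IsConjLits (B i)) (hl : IsLiteral l)
    (h1 : ∀ i, PropValid (impl (B i) (neg l)))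
    (h2 : ∀ i, PropValid (impl (B i) (bigOr (List.ofFn A)))) :
    Valid (impl
      (alw (bigAnd (List.ofFn fun i => impl (A i) (next (B i)))))
      (alw (impl (bigOr (List.ofFn A)) (next (alw (neg l)))))) :=
  stmt_5_general n A B l h1 h2
end

section
/- Soundness of the full temporal resolution rule: let A_0,…,A_n, B_0,…,B_n and C be conjunctions of literals and l a literal such that, for every i with 0 ≤ i ≤ n, the propositional formulae B_i ⇒ ¬l and B_i ⇒ (A_0 ∨ … ∨ A_n) are valid. Then the formula (□(⋀_{i=0}^{n} (A_i ⇒ ◯B_i)) ∧ □(C ⇒ ◇l)) ⇒ □(C ⇒ ((⋀_{i=0}^{n} ¬A_i) W l)) is valid. -/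
/-!
The hypotheses make `A₀ ∨ … ∨ Aₙ` a loop: whenever some `Aᵢ` holds, the step clauses force `Bᵢ`
at the next index, and `Bᵢ` forces `¬l` together with some `Aᵢ'` there. So once some `Aᵢ` holds,
`l` is false at every later index. Given `C` at `j`, `◇l` yields a first index `k ≥ j` with `l`,
and no `Aᵢ` can hold in `[j, k)`, which is `(⋀ ¬Aᵢ) W l` at `j`.
-/

namespace PLTL

variable {P : Type} (σ : ℕ → Set P)

theorem sat_bigAnd_iff (L : List (PLTL P)) (i : ℕ) :
    Sat σ (bigAnd L) i ↔ ∀ F ∈ L, Sat σ F i := by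
  induction L with
  | nil => simp [bigAnd, Sat]
  | cons a t ih => simp_all [bigAnd, Sat]

theorem sat_bigOr_iff (L : List (PLTL P)) (i : ℕ) :
    Sat σ (bigOr L) i ↔ ∃ F ∈ L, Sat σ F i := by
  induction L with
  | nil => simp [bigOr, Sat]
  | cons a t ih => simp_all [bigOr, Sat]

theorem sat_bigAnd_ofFn_iff {m : ℕ} (f : Fin m → PLTL P) (i : ℕ) :
    Sat σ (bigAnd (List.ofFn f)) i ↔ ∀ k, Sat σ (f k) i := by
  simp [sat_bigAnd_iff]

theorem sat_bigOr_ofFn_iff {m : ℕ} (f : Fin m → PLTL P) (i : ℕ) :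
    Sat σ (bigOr (List.ofFn f)) i ↔ ∃ k, Sat σ (f k) i := by
  simp [sat_bigOr_iff]

end PLTL

theorem Nat.forall_gt_not_of_step {a p : ℕ → Prop} (hstep : ∀ t, a t → a (t + 1) ∧ ¬ p (t + 1))
    {m : ℕ} (hm : a m) : ∀ t, m < t → ¬ p t := by
  have hinv : ∀ t, m + 1 ≤ t → a t ∧ ¬ p t := by
    intro t ht
    induction t, ht using Nat.le_induction with
    | base => exact hstep m hm
    | succ t _ ih => exact hstep t ih.1
  exact fun t ht => (hinv t ht).2

theorem Nat.exists_first_of_step {a p : ℕ → Prop} (hstep : ∀ t, a t → a (t + 1) ∧ ¬ p (t + 1))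
    {j : ℕ} (hev : ∃ k, j ≤ k ∧ p k) :
    ∃ k, j ≤ k ∧ p k ∧ ∀ m, j ≤ m → m < k → ¬ a m := by
  classical
  obtain ⟨hjk, hpk⟩ := Nat.find_spec hev
  exact ⟨Nat.find hev, hjk, hpk, fun m _ hmk ham =>
    Nat.forall_gt_not_of_step hstep ham _ hmk hpk⟩

namespace PLTL

theorem loop_step {P : Type} {σ : ℕ → Set P} {m : ℕ} {A B : Fin m → PLTL P} {l : PLTL P}
    (h1 : ∀ i, PropValid (impl (B i) (neg l)))
    (h2 : ∀ i, PropValid (impl (B i) (bigOr (List.ofFn A))))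
    (hstep : ∀ t i, Sat σ (A i) t → Sat σ (B i) (t + 1)) (t : ℕ) :
    (∃ i, Sat σ (A i) t) → (∃ i, Sat σ (A i) (t + 1)) ∧ ¬ Sat σ l (t + 1) := by
  rintro ⟨i, hAi⟩
  have hBi := hstep t i hAi
  exact ⟨(sat_bigOr_ofFn_iff σ A _).mp (h2 i σ _ hBi), h1 i σ _ hBi⟩

end PLTL

open PLTL in
theorem stmt_6_general {P : Type} (n : ℕ) (A B : Fin (n + 1) → PLTL P)
    (C l : PLTL P)
    (h1 : ∀ i, PropValid (impl (B i) (neg l)))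
    (h2 : ∀ i, PropValid (impl (B i) (bigOr (List.ofFn A)))) :
    Valid (impl
      (conj (alw (bigAnd (List.ofFn fun i => impl (A i) (next (B i)))))
            (alw (impl C (evtl l))))
      (alw (impl C (unls (bigAnd (List.ofFn fun i => neg (A i))) l)))) := by
  rintro σ ⟨hsteps, hev⟩ j - hCj
  have hstep : ∀ t i, Sat σ (A i) t → Sat σ (B i) (t + 1) := fun t i =>
    (sat_bigAnd_ofFn_iff σ _ t).mp (hsteps t t.zero_le) i
  obtain ⟨k, hjk, hlk, hnoA⟩ :=
    Nat.exists_first_of_step (loop_step h1 h2 hstep) (hev j j.zero_le hCj)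
  refine Or.inl ⟨k, hjk, hlk, fun m hjm hmk => ?_⟩
  exact (sat_bigAnd_ofFn_iff σ _ m).mpr fun i hAi => hnoA m hjm hmk ⟨i, hAi⟩

open PLTL in
/-- soundness of the full temporal resolution rule. -/
theorem stmt_6 {P : Type} [Countable P] (n : ℕ) (A B : Fin (n + 1) → PLTL P)
    (C l : PLTL P)
    (hA : ∀ i, IsConjLits (A i)) (hB : ∀ i, IsConjLits (B i)) (hC : IsConjLits C)
    (hl : IsLiteral l)
    (h1 : ∀ i, PropValid (impl (B i) (neg l)))
    (h2 : ∀ i, PropValid (impl (B i) (bigOr (List.ofFn A)))) :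
    Valid (impl
      (conj (alw (bigAnd (List.ofFn fun i => impl (A i) (next (B i)))))
            (alw (impl C (evtl l))))
      (alw (impl C (unls (bigAnd (List.ofFn fun i => neg (A i))) l)))) :=
  stmt_6_general n A B C l h1 h2
end

section
/- Augmented clause sets are well-behaved: for every finite set S of SNF clauses, if S is satisfiable then Aug(S) has a normal model; equivalently, Aug(S) is either unsatisfiable or has a normal model. Moreover, any model of S can be extended to a normal model of Aug(S) by giving each w_l, at every index, the same truth value as ¬l ∧ ◇l. -/
/-- A literal over proposition symbols `P`: a proposition symbol (`pos = true`)
or a negated proposition symbol (`pos = false`). -/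
structure Lit (P : Type) where
  pos : Bool
  sym : P

/-- The complement of a literal. -/
def Lit.negate {P : Type} (l : Lit P) : Lit P := ⟨!l.pos, l.sym⟩

/-- A literal holds in model `σ` at index `i`. -/
def Lit.holds {P : Type} (σ : ℕ → Set P) (i : ℕ) (l : Lit P) : Prop :=
  if l.pos then l.sym ∈ σ i else l.sym ∉ σ i

/-- A conjunction of literals holds (the empty conjunction is the constant `true`). -/
def conjHolds {P : Type} (σ : ℕ → Set P) (i : ℕ) (L : List (Lit P)) : Prop :=
  ∀ l ∈ L, Lit.holds σ i l

/-- A disjunction of literals holds. -/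
def disjHolds {P : Type} (σ : ℕ → Set P) (i : ℕ) (L : List (Lit P)) : Prop :=
  ∃ l ∈ L, Lit.holds σ i l

/-- SNF clauses: initial clauses `start ⇒ ⋁ rhs`, step clauses `⋀ lhs ⇒ ◯⋁ rhs`
(an empty `lhs` is the constant `true`), and sometime clauses `⋀ lhs ⇒ ◇ev`. -/
inductive SNF (P : Type) : Type
  | initial (rhs : List (Lit P))
  | step (lhs rhs : List (Lit P))
  | sometime (lhs : List (Lit P)) (ev : Lit P)

/-- Satisfaction of an SNF clause in model `σ` at index `i`. -/
def SNF.holds {P : Type} (σ : ℕ → Set P) (i : ℕ) : SNF P → Prop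
  | .initial rhs => i = 0 → disjHolds σ i rhs
  | .step lhs rhs => conjHolds σ i lhs → disjHolds σ (i + 1) rhs
  | .sometime lhs ev => conjHolds σ i lhs → ∃ k, i ≤ k ∧ Lit.holds σ k ev

/-- `σ` is a model of the clause set `S`, i.e. `(σ,0) ⊨ □⋀_{A ∈ S} A`. -/
def IsModel {P : Type} (σ : ℕ → Set P) (S : Set (SNF P)) : Prop :=
  ∀ (i : ℕ), ∀ c ∈ S, SNF.holds σ i c

/-- The proposition symbols occurring in an SNF clause. -/
def SNF.syms {P : Type} : SNF P → Set P
  | .initial rhs => {p | ∃ l ∈ rhs, Lit.sym l = p}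
  | .step lhs rhs => {p | ∃ l ∈ lhs ++ rhs, Lit.sym l = p}
  | .sometime lhs ev => {p | ∃ l ∈ ev :: lhs, Lit.sym l = p}

/-- The proposition symbols occurring in a clause set. -/
def symsOf {P : Type} (S : Set (SNF P)) : Set P := ⋃ c ∈ S, c.syms

/-- The literals occurring as eventualities (◇l on the right-hand side of
sometime clauses) in `S`. -/
def evLits {P : Type} (S : Set (SNF P)) : Set (Lit P) :=
  {l | ∃ lhs, SNF.sometime lhs l ∈ S}

/-- The positive literal on symbol `p`. -/
def posLit {P : Type} (p : P) : Lit P := ⟨true, p⟩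

/-- The augmented clause set `Aug(S)`, where `w l` is the fresh symbol `w_l`
for each eventuality literal `l` of `S`: adds `w_l ⇒ ◯(l ∨ w_l)` and, for each
sometime clause `C ⇒ ◇l` of `S`, `start ⇒ (¬C ∨ l ∨ w_l)` and `true ⇒ ◯(¬C ∨ l ∨ w_l)`. -/
def Aug {P : Type} (S : Set (SNF P)) (w : Lit P → P) : Set (SNF P) :=
  S ∪ {c | ∃ l ∈ evLits S, c = SNF.step [posLit (w l)] [l, posLit (w l)]}
    ∪ {c | ∃ lhs l, SNF.sometime lhs l ∈ S ∧
          c = SNF.initial (lhs.map Lit.negate ++ [l, posLit (w l)])}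
    ∪ {c | ∃ lhs l, SNF.sometime lhs l ∈ S ∧
          c = SNF.step [] (lhs.map Lit.negate ++ [l, posLit (w l)])}

/-- The symbols `w_l` are fresh: none occurs in `S`, and distinct eventuality
literals receive distinct fresh symbols. -/
def FreshW {P : Type} (S : Set (SNF P)) (w : Lit P → P) : Prop :=
  (∀ l ∈ evLits S, ∀ c ∈ S, w l ∉ SNF.syms c) ∧ Set.InjOn w (evLits S)

/-- A normal model of `Aug(S)`: a model of `Aug(S)` which moreover satisfies
`□(w_l ⇔ (¬l ∧ ◇l))` for each eventuality literal `l` of `S`. -/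
def NormalModel {P : Type} (σ : ℕ → Set P) (S : Set (SNF P)) (w : Lit P → P) : Prop :=
  IsModel σ (Aug S w) ∧
  ∀ (i : ℕ), ∀ l ∈ evLits S,
    (w l ∈ σ i ↔ (¬ Lit.holds σ i l ∧ ∃ k, i ≤ k ∧ Lit.holds σ k l))

/-- Extend a model `σ` of `S` by giving each `w_l`, at every index, the truth
value of `¬l ∧ ◇l` (all other symbols keep their value, and every symbol in the
image of `w` not of the prescribed form is made false). -/
def extendW {P : Type} (S : Set (SNF P)) (w : Lit P → P) (σ : ℕ → Set P) : ℕ → Set P :=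
  fun i => {p | (p ∉ w '' evLits S ∧ p ∈ σ i) ∨
    ∃ l ∈ evLits S, p = w l ∧ ¬ Lit.holds σ i l ∧ ∃ k, i ≤ k ∧ Lit.holds σ k l}
/-!
The symbols `w_l` are fresh, so re-valuing them as `¬l ∧ ◇l` leaves every clause of `S` true.
With that valuation the new clauses hold as well: `w_l ⇒ ◯(l ∨ w_l)` because an eventuality
that is still pending and not met at the next index is pending there, and
`¬C ∨ l ∨ w_l` because whenever `C` holds, `◇l` holds, so `l` is either met now or pending.
-/

variable {P : Type} {σ τ : ℕ → Set P}

/-- The paper's `¬l ∧ ◇l`. -/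
def Lit.Pending (σ : ℕ → Set P) (i : ℕ) (l : Lit P) : Prop :=
  ¬ l.holds σ i ∧ ∃ k, i ≤ k ∧ l.holds σ k

@[simp]
lemma Lit.holds_negate (i : ℕ) (l : Lit P) : l.negate.holds σ i ↔ ¬ l.holds σ i := by
  unfold Lit.holds Lit.negate
  cases l.pos <;> simp

@[simp]
lemma Lit.holds_posLit (i : ℕ) (p : P) : (posLit p).holds σ i ↔ p ∈ σ i := by
  simp [Lit.holds, posLit]

section Congr

lemma Lit.holds_congr {i : ℕ} {l : Lit P} (h : l.sym ∈ σ i ↔ l.sym ∈ τ i) :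
    l.holds σ i ↔ l.holds τ i := by
  unfold Lit.holds
  split <;> simp [h]

lemma Lit.pending_congr {i : ℕ} {l : Lit P} (h : ∀ j, l.sym ∈ σ j ↔ l.sym ∈ τ j) :
    l.Pending σ i ↔ l.Pending τ i :=
  and_congr (not_congr (Lit.holds_congr (h i)))
    (exists_congr fun k => and_congr_right fun _ => Lit.holds_congr (h k))

lemma conjHolds_congr {i : ℕ} {L : List (Lit P)} (h : ∀ l ∈ L, l.sym ∈ σ i ↔ l.sym ∈ τ i) :
    conjHolds σ i L ↔ conjHolds τ i L :=
  forall₂_congr fun l hl => Lit.holds_congr (h l hl)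

lemma disjHolds_congr {i : ℕ} {L : List (Lit P)} (h : ∀ l ∈ L, l.sym ∈ σ i ↔ l.sym ∈ τ i) :
    disjHolds σ i L ↔ disjHolds τ i L :=
  exists_congr fun l => and_congr_right fun hl => Lit.holds_congr (h l hl)

lemma SNF.holds_congr {i : ℕ} (c : SNF P) (h : ∀ j, ∀ p ∈ c.syms, p ∈ σ j ↔ p ∈ τ j) :
    c.holds σ i ↔ c.holds τ i := by
  cases c with
  | initial rhs =>
    exact imp_congr_right fun _ => disjHolds_congr fun l hl => h i _ ⟨l, hl, rfl⟩
  | step lhs rhs =>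
    exact imp_congr
      (conjHolds_congr fun l hl => h i _ ⟨l, List.mem_append_left _ hl, rfl⟩)
      (disjHolds_congr fun l hl => h (i + 1) _ ⟨l, List.mem_append_right _ hl, rfl⟩)
  | sometime lhs ev =>
    exact imp_congr
      (conjHolds_congr fun l hl => h i _ ⟨l, List.mem_cons_of_mem _ hl, rfl⟩)
      (exists_congr fun k => and_congr_right fun _ =>
        Lit.holds_congr (h k _ ⟨ev, List.mem_cons_self, rfl⟩))

lemma isModel_congr {S : Set (SNF P)} (h : ∀ j, ∀ p ∈ symsOf S, p ∈ σ j ↔ p ∈ τ j) :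
    IsModel σ S ↔ IsModel τ S :=
  forall_congr' fun _ => forall₂_congr fun c hc =>
    SNF.holds_congr c fun j p hp => h j p (Set.mem_biUnion hc hp)

end Congr

lemma IsModel.mono {S T : Set (SNF P)} (hST : S ⊆ T) (hσ : IsModel σ T) : IsModel σ S :=
  fun i c hc => hσ i c (hST hc)

lemma subset_aug (S : Set (SNF P)) (w : Lit P → P) : S ⊆ Aug S w :=
  fun _ hc => Or.inl (Or.inl (Or.inl hc))

lemma sym_mem_symsOf {S : Set (SNF P)} {l : Lit P} (hl : l ∈ evLits S) : l.sym ∈ symsOf S := by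
  obtain ⟨lhs, hS⟩ := hl
  exact Set.mem_biUnion hS ⟨l, List.mem_cons_self, rfl⟩

section Augmentation

lemma Lit.Pending.succ {i : ℕ} {l : Lit P} (hl : l.Pending σ i) (hnext : ¬ l.holds σ (i + 1)) :
    l.Pending σ (i + 1) := by
  obtain ⟨hnow, k, hik, hk⟩ := hl
  have hki : k ≠ i := by rintro rfl; exact hnow hk
  exact ⟨hnext, k, by omega, hk⟩

lemma SNF.holds_step_of_pending {l : Lit P} {p : P} (hp : ∀ j, p ∈ σ j ↔ l.Pending σ j)
    (i : ℕ) : (SNF.step [posLit p] [l, posLit p]).holds σ i := by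
  intro hconj
  have hpi : p ∈ σ i := (Lit.holds_posLit i p).1 (hconj _ List.mem_cons_self)
  by_cases hnext : l.holds σ (i + 1)
  · exact ⟨l, by simp, hnext⟩
  · exact ⟨posLit p, by simp, (Lit.holds_posLit _ p).2 ((hp _).2 (((hp i).1 hpi).succ hnext))⟩

lemma disjHolds_of_sometime_of_pending {i : ℕ} {lhs : List (Lit P)} {l : Lit P} {p : P}
    (hS : (SNF.sometime lhs l).holds σ i) (hp : p ∈ σ i ↔ l.Pending σ i) :
    disjHolds σ i (lhs.map Lit.negate ++ [l, posLit p]) := by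
  by_cases hC : conjHolds σ i lhs
  · obtain ⟨k, hik, hk⟩ := hS hC
    by_cases hnow : l.holds σ i
    · exact ⟨l, by simp, hnow⟩
    · exact ⟨posLit p, by simp, (Lit.holds_posLit i p).2 (hp.2 ⟨hnow, k, hik, hk⟩)⟩
  · obtain ⟨m, hm, hnm⟩ : ∃ m ∈ lhs, ¬ m.holds σ i := by simpa [conjHolds] using hC
    exact ⟨m.negate, List.mem_append_left _ (List.mem_map_of_mem hm), (Lit.holds_negate i m).2 hnm⟩

lemma normalModel_of_isModel {S : Set (SNF P)} {w : Lit P → P} (hσ : IsModel σ S)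
    (hw : ∀ i, ∀ l ∈ evLits S, w l ∈ σ i ↔ l.Pending σ i) : NormalModel σ S w := by
  refine ⟨fun i c hc => ?_, hw⟩
  rcases hc with ((hc | ⟨l, hl, rfl⟩) | ⟨lhs, l, hS, rfl⟩) | ⟨lhs, l, hS, rfl⟩
  · exact hσ i c hc
  · exact SNF.holds_step_of_pending (fun j => hw j l hl) i
  · exact fun _ => disjHolds_of_sometime_of_pending (hσ i _ hS) (hw i l ⟨lhs, hS⟩)
  · exact fun _ => disjHolds_of_sometime_of_pending (hσ (i + 1) _ hS) (hw (i + 1) l ⟨lhs, hS⟩)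

end Augmentation

section Extension

variable {S : Set (SNF P)} {w : Lit P → P}

lemma FreshW.notMem_image (hw : FreshW S w) {p : P} (hp : p ∈ symsOf S) : p ∉ w '' evLits S := by
  rintro ⟨l, hl, rfl⟩
  obtain ⟨c, hc, hpc⟩ := Set.mem_iUnion₂.1 hp
  exact hw.1 l hl c hc hpc

lemma mem_extendW_of_notMem_image {p : P} (hp : p ∉ w '' evLits S) (i : ℕ) :
    p ∈ extendW S w σ i ↔ p ∈ σ i := by
  constructor
  · rintro (⟨_, h⟩ | ⟨l, hl, rfl, _⟩)
    · exact h
    · exact absurd ⟨l, hl, rfl⟩ hp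
  · exact fun h => Or.inl ⟨hp, h⟩

lemma mem_extendW_apply (hinj : Set.InjOn w (evLits S)) {l : Lit P} (hl : l ∈ evLits S)
    (i : ℕ) : w l ∈ extendW S w σ i ↔ l.Pending σ i := by
  constructor
  · rintro (⟨hnot, _⟩ | ⟨l', hl', heq, hpend⟩)
    · exact absurd ⟨l, hl, rfl⟩ hnot
    · rwa [hinj hl hl' heq]
  · exact fun hpend => Or.inr ⟨l, hl, rfl, hpend⟩

lemma mem_extendW_iff_of_mem_symsOf (hw : FreshW S w) {p : P} (hp : p ∈ symsOf S) (i : ℕ) :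
    p ∈ extendW S w σ i ↔ p ∈ σ i :=
  mem_extendW_of_notMem_image (hw.notMem_image hp) i

lemma normalModel_extendW (hw : FreshW S w) (hσ : IsModel σ S) :
    NormalModel (extendW S w σ) S w := by
  refine normalModel_of_isModel ((isModel_congr fun j p hp => ?_).2 hσ) fun i l hl => ?_
  · exact mem_extendW_iff_of_mem_symsOf hw hp j
  · rw [mem_extendW_apply hw.2 hl, Lit.pending_congr fun j =>
      mem_extendW_iff_of_mem_symsOf hw (sym_mem_symsOf hl) j]

end Extension

theorem stmt_8_general {P : Type} (S : Set (SNF P))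
    (w : Lit P → P) (hw : FreshW S w) :
    ((∃ σ : ℕ → Set P, IsModel σ S) → ∃ σ : ℕ → Set P, NormalModel σ S w) ∧
    ((¬ ∃ σ : ℕ → Set P, IsModel σ (Aug S w)) ∨ ∃ σ : ℕ → Set P, NormalModel σ S w) ∧
    (∀ σ : ℕ → Set P, IsModel σ S → NormalModel (extendW S w σ) S w) := by
  refine ⟨fun ⟨σ, hσ⟩ => ⟨_, normalModel_extendW hw hσ⟩, ?_,
    fun σ hσ => normalModel_extendW hw hσ⟩
  refine or_iff_not_imp_left.2 fun hAug => ?_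
  obtain ⟨σ, hσ⟩ := not_not.1 hAug
  exact ⟨_, normalModel_extendW hw (hσ.mono (subset_aug S w))⟩

/-- augmented clause sets are well-behaved: if `S` is satisfiable then
`Aug(S)` has a normal model (equivalently, `Aug(S)` is either unsatisfiable or has a
normal model); moreover any model of `S`, extended by giving each `w_l` at every index
the truth value of `¬l ∧ ◇l`, is a normal model of `Aug(S)`. -/
theorem stmt_8 {P : Type} [Countable P] (S : Set (SNF P)) (hfin : S.Finite)
    (w : Lit P → P) (hw : FreshW S w) :
    ((∃ σ : ℕ → Set P, IsModel σ S) → ∃ σ : ℕ → Set P, NormalModel σ S w) ∧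
    ((¬ ∃ σ : ℕ → Set P, IsModel σ (Aug S w)) ∨ ∃ σ : ℕ → Set P, NormalModel σ S w) ∧
    (∀ σ : ℕ → Set P, IsModel σ S → NormalModel (extendW S w σ) S w) :=
  stmt_8_general S w hw
end

section
/- Adding clauses shrinks the behaviour graph: let S be a finite set of SNF clauses and let T be obtained from S by adding finitely many initial clauses and finitely many step clauses involving only proposition symbols occurring in S. Then the behaviour graph of T is a subgraph of the behaviour graph of S: every node of the behaviour graph of T is a node of the behaviour graph of S, every edge of the behaviour graph of T is an edge of the behaviour graph of S, and every initial node of the behaviour graph of T is an initial node of the behaviour graph of S. -/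
/-- A node of the behaviour graph: a valuation `V` (the set of proposition symbols of
`S` made true) together with a set `E` of outstanding eventuality literals. -/
abbrev BNode (P : Type) := Set P × Set (Lit P)

/-- A literal is satisfied by a valuation. -/
def litSatV {P : Type} (V : Set P) (l : Lit P) : Prop :=
  if l.pos then l.sym ∈ V else l.sym ∉ V

/-- A conjunction of literals is satisfied by a valuation (empty = `true`). -/
def conjSatV {P : Type} (V : Set P) (L : List (Lit P)) : Prop := ∀ l ∈ L, litSatV V l

/-- A disjunction of literals is satisfied by a valuation. -/
def disjSatV {P : Type} (V : Set P) (L : List (Lit P)) : Prop := ∃ l ∈ L, litSatV V l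

/-- The eventuality literals of the sometime clauses of `S` fired by valuation `V`. -/
def evSet {P : Type} (S : Set (SNF P)) (V : Set P) : Set (Lit P) :=
  {l | ∃ lhs, SNF.sometime lhs l ∈ S ∧ conjSatV V lhs}

/-- The edge relation of the behaviour graph of `S`: there is an edge from `(V,E)` to
`(V', E' ∪ E″)` whenever `V'` is a valuation over the symbols of `S` satisfying the
right-hand side of every step clause fired by `V`, where `E'` consists of the elements
of `E` not satisfied by `V` and `E″ = evSet S V'`. -/
def bgEdge {P : Type} (S : Set (SNF P)) (n m : BNode P) : Prop :=
  m.1 ⊆ symsOf S ∧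
  (∀ lhs rhs, SNF.step lhs rhs ∈ S → conjSatV n.1 lhs → disjSatV m.1 rhs) ∧
  m.2 = {l ∈ n.2 | ¬ litSatV n.1 l} ∪ evSet S m.1

/-- The initial nodes of the behaviour graph of `S`. -/
def bgInitial {P : Type} (S : Set (SNF P)) (n : BNode P) : Prop :=
  n.1 ⊆ symsOf S ∧ (∀ rhs, SNF.initial rhs ∈ S → disjSatV n.1 rhs) ∧
  n.2 = evSet S n.1

/-- A node is in the behaviour graph of `S` iff it is reachable from an initial node. -/
def inBG {P : Type} (S : Set (SNF P)) (n : BNode P) : Prop :=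
  ∃ n₀, bgInitial S n₀ ∧ Relation.ReflTransGen (bgEdge S) n₀ n

/-- A set `K` of nodes which survives the deletion rules: all its members are nodes of
the behaviour graph, every member has a successor in `K`, and for every member and
every outstanding eventuality `l` of that member, some node of `K` whose valuation
satisfies `l` is reachable from it inside `K`. -/
def goodSet {P : Type} (S : Set (SNF P)) (K : Set (BNode P)) : Prop :=
  (∀ n ∈ K, inBG S n) ∧
  (∀ n ∈ K, ∃ m ∈ K, bgEdge S n m) ∧
  (∀ n ∈ K, ∀ l ∈ n.2,
    ∃ m ∈ K, Relation.ReflTransGen (fun a b => a ∈ K ∧ b ∈ K ∧ bgEdge S a b) n m ∧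
      litSatV m.1 l)

/-- The reduced behaviour graph of `S`: the set of nodes surviving exhaustive
application of the deletion rules, i.e. the largest set closed under the two
survival conditions. -/
def reducedBG {P : Type} (S : Set (SNF P)) : Set (BNode P) :=
  ⋃₀ {K | goodSet S K}

/-! Extra initial and step clauses only add constraints on initial valuations and on
successor valuations. Since they mention no new symbols and no eventualities, the
valuations range over the same symbols and each valuation fires the same eventualities,
so every initial node and every edge of the larger graph is one of the smaller graph,
and reachability transfers along. -/

section Superset

variable {P : Type} {S T : Set (SNF P)}

lemma symsOf_union_subset_left {U : Set (SNF P)} (h : ∀ c ∈ U, c.syms ⊆ symsOf S) :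
    symsOf (S ∪ U) ⊆ symsOf S := by
  simp only [symsOf, Set.biUnion_union]
  exact Set.union_subset le_rfl (Set.iUnion₂_subset h)

lemma evSet_eq_of_sometime_mem (hST : S ⊆ T)
    (hsome : ∀ lhs l, SNF.sometime lhs l ∈ T → SNF.sometime lhs l ∈ S) (V : Set P) :
    evSet T V = evSet S V := by
  ext l
  exact ⟨fun ⟨lhs, h, hV⟩ => ⟨lhs, hsome lhs l h, hV⟩,
    fun ⟨lhs, h, hV⟩ => ⟨lhs, hST h, hV⟩⟩

lemma bgInitial.of_superset (hST : S ⊆ T) (hsyms : symsOf T ⊆ symsOf S)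
    (hev : ∀ V, evSet T V = evSet S V) {n : BNode P} (h : bgInitial T n) :
    bgInitial S n := by
  obtain ⟨hV, hinit, hE⟩ := h
  exact ⟨hV.trans hsyms, fun rhs hc => hinit rhs (hST hc), hE.trans (hev n.1)⟩

lemma bgEdge.of_superset (hST : S ⊆ T) (hsyms : symsOf T ⊆ symsOf S)
    (hev : ∀ V, evSet T V = evSet S V) {n m : BNode P} (h : bgEdge T n m) :
    bgEdge S n m := by
  obtain ⟨hV, hstep, hE⟩ := h
  exact ⟨hV.trans hsyms, fun lhs rhs hc => hstep lhs rhs (hST hc), by rw [hE, hev]⟩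

lemma inBG.of_superset (hST : S ⊆ T) (hsyms : symsOf T ⊆ symsOf S)
    (hev : ∀ V, evSet T V = evSet S V) {n : BNode P} (h : inBG T n) : inBG S n := by
  obtain ⟨n₀, hinit, hpath⟩ := h
  exact ⟨n₀, hinit.of_superset hST hsyms hev,
    Relation.ReflTransGen.mono (fun _ _ => bgEdge.of_superset hST hsyms hev) _ _ hpath⟩

end Superset

theorem stmt_10_general {P : Type} (S U : Set (SNF P))
    (hkinds : ∀ c ∈ U, (∃ rhs, c = SNF.initial rhs) ∨ ∃ lhs rhs, c = SNF.step lhs rhs)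
    (hsyms : ∀ c ∈ U, SNF.syms c ⊆ symsOf S) :
    (∀ n : BNode P, inBG (S ∪ U) n → inBG S n) ∧
    (∀ n m : BNode P, inBG (S ∪ U) n → bgEdge (S ∪ U) n m →
      inBG S n ∧ bgEdge S n m) ∧
    (∀ n : BNode P, bgInitial (S ∪ U) n → bgInitial S n) := by
  have hST : S ⊆ S ∪ U := Set.subset_union_left
  have hsyms' : symsOf (S ∪ U) ⊆ symsOf S := symsOf_union_subset_left hsyms
  have hsome : ∀ lhs l, SNF.sometime lhs l ∈ S ∪ U → SNF.sometime lhs l ∈ S :=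
    fun lhs l hc => hc.resolve_right fun hU => by
      rcases hkinds _ hU with ⟨_, h⟩ | ⟨_, _, h⟩ <;> cases h
  have hev := evSet_eq_of_sometime_mem hST hsome
  exact ⟨fun _ hn => hn.of_superset hST hsyms' hev,
    fun _ _ hn he => ⟨hn.of_superset hST hsyms' hev, he.of_superset hST hsyms' hev⟩,
    fun _ hn => hn.of_superset hST hsyms' hev⟩

/-- adding finitely many initial and step clauses over the symbols of
`S` shrinks the behaviour graph: every node, edge and initial node of the behaviour
graph of `T = S ∪ U` is, respectively, a node, edge and initial node of the behaviour
graph of `S`. -/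
theorem stmt_10 {P : Type} [Countable P] (S U : Set (SNF P))
    (hS : S.Finite) (hU : U.Finite)
    (hkinds : ∀ c ∈ U, (∃ rhs, c = SNF.initial rhs) ∨ ∃ lhs rhs, c = SNF.step lhs rhs)
    (hsyms : ∀ c ∈ U, SNF.syms c ⊆ symsOf S) :
    (∀ n : BNode P, inBG (S ∪ U) n → inBG S n) ∧
    (∀ n m : BNode P, inBG (S ∪ U) n → bgEdge (S ∪ U) n m →
      inBG S n ∧ bgEdge S n m) ∧
    (∀ n : BNode P, bgInitial (S ∪ U) n → bgInitial S n) :=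
  stmt_10_general S U hkinds hsyms
end

section
/- Every model comes from a path through the behaviour graph: let S be a finite set of SNF clauses and σ a model of S. Then there is an infinite sequence N_0, N_1, N_2, … of nodes of the behaviour graph of S, with N_0 an initial node and an edge from N_i to N_{i+1} for every i, such that for every i ∈ ℕ the set of proposition symbols made true by the valuation component of N_i equals σ(i) restricted to the proposition symbols occurring in S. -/
/-!
The path is read off the model: its valuations are the restrictions `σ i ∩ symsOf S`, and its
eventuality components are forced by the edge relation, starting from the eventualities fired
at time `0`. Since every literal of a clause of `S` is over `symsOf S`, restricting `σ` does not
change which literals hold, so the initial and step clauses that `σ` satisfies are exactly the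
conditions making the first node initial and each step an edge.
-/

section BehaviourGraph

variable {P : Type} {S : Set (SNF P)}

lemma litSatV_inter_iff {V A : Set P} {l : Lit P} (h : l.sym ∈ A) :
    litSatV (V ∩ A) l ↔ litSatV V l := by
  unfold litSatV
  split_ifs <;> simp [h]

lemma mem_symsOf_of_mem_syms {c : SNF P} (hc : c ∈ S) {p : P} (hp : p ∈ c.syms) :
    p ∈ symsOf S :=
  Set.mem_biUnion hc hp

-- `Lit.holds σ i` unfolds to `litSatV (σ i)`, so the literals `hσ` provides feed straight into
-- `litSatV_inter_iff`.
lemma IsModel.disjSatV_initial {σ : ℕ → Set P} (hσ : IsModel σ S) {rhs : List (Lit P)}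
    (hc : SNF.initial rhs ∈ S) : disjSatV (σ 0 ∩ symsOf S) rhs := by
  obtain ⟨l, hl, hholds⟩ := hσ 0 _ hc rfl
  exact ⟨l, hl, (litSatV_inter_iff (mem_symsOf_of_mem_syms hc ⟨l, hl, rfl⟩)).2 hholds⟩

lemma IsModel.disjSatV_step {σ : ℕ → Set P} (hσ : IsModel σ S) {lhs rhs : List (Lit P)}
    (hc : SNF.step lhs rhs ∈ S) {i : ℕ} (hlhs : conjSatV (σ i ∩ symsOf S) lhs) :
    disjSatV (σ (i + 1) ∩ symsOf S) rhs := by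
  have hfired : conjHolds σ i lhs := fun l hl =>
    (litSatV_inter_iff (mem_symsOf_of_mem_syms hc ⟨l, List.mem_append_left _ hl, rfl⟩)).1
      (hlhs l hl)
  obtain ⟨l, hl, hholds⟩ := hσ i _ hc hfired
  exact ⟨l, hl,
    (litSatV_inter_iff (mem_symsOf_of_mem_syms hc ⟨l, List.mem_append_right _ hl, rfl⟩)).2 hholds⟩

variable (S) in
/-- The outstanding eventualities along a sequence of valuations `V`, as dictated by
`bgInitial` and `bgEdge`. -/
def outstandingEvs (V : ℕ → Set P) : ℕ → Set (Lit P)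
  | 0 => evSet S (V 0)
  | i + 1 => {l ∈ outstandingEvs V i | ¬ litSatV (V i) l} ∪ evSet S (V (i + 1))

variable (S) in
def pathOfValuations (V : ℕ → Set P) (i : ℕ) : BNode P :=
  (V i, outstandingEvs S V i)

lemma inBG_of_path {N : ℕ → BNode P} (h0 : bgInitial S (N 0))
    (hstep : ∀ i, bgEdge S (N i) (N (i + 1))) (i : ℕ) : inBG S (N i) := by
  induction i with
  | zero => exact ⟨N 0, h0, .refl⟩
  | succ i ih =>
    obtain ⟨n₀, hn₀, hreach⟩ := ih
    exact ⟨n₀, hn₀, hreach.tail (hstep i)⟩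

end BehaviourGraph

theorem stmt_11_general {P : Type} (S : Set (SNF P))
    (σ : ℕ → Set P) (hσ : IsModel σ S) :
    ∃ N : ℕ → BNode P,
      bgInitial S (N 0) ∧
      (∀ i : ℕ, bgEdge S (N i) (N (i + 1))) ∧
      (∀ i : ℕ, inBG S (N i)) ∧
      (∀ i : ℕ, (N i).1 = σ i ∩ symsOf S) := by
  set N := pathOfValuations S (fun i => σ i ∩ symsOf S)
  have h0 : bgInitial S (N 0) :=
    ⟨Set.inter_subset_right, fun _ hc => hσ.disjSatV_initial hc, rfl⟩
  have hstep : ∀ i, bgEdge S (N i) (N (i + 1)) := fun _ =>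
    ⟨Set.inter_subset_right, fun _ _ hc => hσ.disjSatV_step hc, rfl⟩
  exact ⟨N, h0, hstep, inBG_of_path h0 hstep, fun _ => rfl⟩

/-- every model of `S` arises from a path through the behaviour graph:
there is an infinite path starting at an initial node, going along edges, whose
valuation components agree with `σ` on the proposition symbols of `S`. -/
theorem stmt_11 {P : Type} [Countable P] (S : Set (SNF P)) (hS : S.Finite)
    (σ : ℕ → Set P) (hσ : IsModel σ S) :
    ∃ N : ℕ → BNode P,
      bgInitial S (N 0) ∧
      (∀ i : ℕ, bgEdge S (N i) (N (i + 1))) ∧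
      (∀ i : ℕ, inBG S (N i)) ∧
      (∀ i : ℕ, (N i).1 = σ i ∩ symsOf S) :=
  stmt_11_general S σ hσ
end

section
/- Deletion propagates along reachability: let S be a finite set of SNF clauses with behaviour graph G, and let n = (V,E) be a node of G such that some literal l ∈ E is not satisfied by V and no node of G reachable from n has a valuation satisfying l. Then every node of G reachable from n also contains l as an outstanding eventuality not satisfied by its valuation, and hence every node reachable from n is deleted in the reduced behaviour graph of S. -/
theorem mem_snd_of_bgEdge {P : Type} {S : Set (SNF P)} {a b : BNode P} (h : bgEdge S a b)
    {l : Lit P} (hl : l ∈ a.2) (hlV : ¬ litSatV a.1 l) : l ∈ b.2 := by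
  rw [h.2.2]
  exact Or.inl ⟨hl, hlV⟩

theorem mem_snd_of_reflTransGen_bgEdge {P : Type} {S : Set (SNF P)} {n m : BNode P}
    (hnm : Relation.ReflTransGen (bgEdge S) n m) {l : Lit P} (hl : l ∈ n.2)
    (hunsat : ∀ k, Relation.ReflTransGen (bgEdge S) n k → ¬ litSatV k.1 l) : l ∈ m.2 := by
  induction hnm with
  | refl => exact hl
  | tail hna hab ih => exact mem_snd_of_bgEdge hab ih (hunsat _ hna)

theorem exists_reflTransGen_litSatV_of_mem_reducedBG {P : Type} {S : Set (SNF P)}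
    {m : BNode P} (hm : m ∈ reducedBG S) {l : Lit P} (hl : l ∈ m.2) :
    ∃ m', Relation.ReflTransGen (bgEdge S) m m' ∧ litSatV m'.1 l := by
  obtain ⟨K, hK, hmK⟩ := hm
  obtain ⟨m', -, hpath, hsat⟩ := hK.2.2 m hmK l hl
  exact ⟨m', Relation.ReflTransGen.mono (fun _ _ h => h.2.2) _ _ hpath, hsat⟩

theorem stmt_12_general {P : Type} (S : Set (SNF P))
    (n : BNode P) (l : Lit P) (hl : l ∈ n.2)
    (hnoreach : ∀ m : BNode P, Relation.ReflTransGen (bgEdge S) n m → ¬ litSatV m.1 l) :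
    ∀ m : BNode P, Relation.ReflTransGen (bgEdge S) n m →
      (l ∈ m.2 ∧ ¬ litSatV m.1 l) ∧ m ∉ reducedBG S := by
  intro m hnm
  have hlm : l ∈ m.2 := mem_snd_of_reflTransGen_bgEdge hnm hl hnoreach
  refine ⟨⟨hlm, hnoreach m hnm⟩, fun hm => ?_⟩
  obtain ⟨m', hmm', hsat⟩ := exists_reflTransGen_litSatV_of_mem_reducedBG hm hlm
  exact hnoreach m' (hnm.trans hmm') hsat

/-- deletion propagates along reachability: if the node `n` of the
behaviour graph has an outstanding eventuality `l` not satisfied by its valuation and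
no node reachable from `n` satisfies `l`, then every node reachable from `n` also has
`l` outstanding and unsatisfied, and hence no node reachable from `n` survives in the
reduced behaviour graph. -/
theorem stmt_12 {P : Type} [Countable P] (S : Set (SNF P)) (hS : S.Finite)
    (n : BNode P) (hn : inBG S n) (l : Lit P) (hl : l ∈ n.2)
    (hlV : ¬ litSatV n.1 l)
    (hnoreach : ∀ m : BNode P, Relation.ReflTransGen (bgEdge S) n m → ¬ litSatV m.1 l) :
    ∀ m : BNode P, Relation.ReflTransGen (bgEdge S) n m →
      (l ∈ m.2 ∧ ¬ litSatV m.1 l) ∧ m ∉ reducedBG S :=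
  stmt_12_general S n l hl hnoreach
end

section
/- A finite set S of SNF clauses is unsatisfiable if, and only if, the reduced behaviour graph of S is empty. In particular, if the reduced behaviour graph is non-empty then a model of S can be constructed as an infinite path through the reduced behaviour graph, starting at an initial node, along which every eventuality occurring in a node of the path is satisfied at that node or at some later node of the path. -/
/-! A model of `S`, cut down to the symbols of `S` and paired with its
outstanding eventualities, traces an infinite path through the behaviour graph whose nodes
form a set surviving the deletion rules. Conversely, outstanding eventualities persist along
edges until they are satisfied, so from any node of a surviving set one can keep walking
through finite segments, each of which satisfies every eventuality outstanding at its start;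
concatenating them after a path from an initial node gives a fair path, whose valuations
form a model. -/

open List Relation

section Walks

variable {α : Type*} (seg : α → List α)

def followStep : α × List α → α × List α
  | (_, b :: q) => (b, q)
  | (a, []) =>
    match seg a with
    | [] => (a, [])
    | b :: q => (b, q)

def followWalk (a : α) (j : ℕ) : α × List α := (followStep seg)^[j] (a, [])

theorem followWalk_succ (a : α) (j : ℕ) :
    followWalk seg a (j + 1) = followStep seg (followWalk seg a j) :=
  Function.iterate_succ_apply' _ _ _

theorem exists_followWalk_plan_eq_nil (a : α) (j : ℕ) :
    ∃ i ≥ j, (followWalk seg a i).2 = [] := by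
  induction h : (followWalk seg a j).2 generalizing j with
  | nil => exact ⟨j, le_rfl, h⟩
  | cons b q ih =>
    have hstep : (followWalk seg a (j + 1)).2 = q := by
      rw [followWalk_succ, ← Prod.mk.eta (p := followWalk seg a j), h]; rfl
    obtain ⟨i, hi, hnil⟩ := ih (j + 1) hstep
    exact ⟨i, by omega, hnil⟩

theorem exists_followWalk_eq_of_mem_plan (a : α) (j : ℕ) :
    ∀ x ∈ (followWalk seg a j).2, ∃ k > j, (followWalk seg a k).1 = x := by
  induction h : (followWalk seg a j).2 generalizing j with
  | nil => simp
  | cons b q ih =>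
    have hstep : followWalk seg a (j + 1) = (b, q) := by
      rw [followWalk_succ, ← Prod.mk.eta (p := followWalk seg a j), h]; rfl
    rintro x (_ | ⟨_, hx⟩)
    · exact ⟨j + 1, by omega, by rw [hstep]⟩
    · obtain ⟨k, hk, hkx⟩ := ih (j + 1) (by rw [hstep]) x hx
      exact ⟨k, by omega, hkx⟩

theorem exists_followWalk_eq_of_mem_seg (a : α) {i : ℕ} (hi : (followWalk seg a i).2 = []) :
    ∀ x ∈ seg (followWalk seg a i).1, ∃ k > i, (followWalk seg a k).1 = x := by
  intro x hx
  obtain ⟨b, q, hbq⟩ := exists_cons_of_ne_nil (ne_nil_of_mem hx)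
  have hstep : followWalk seg a (i + 1) = (b, q) := by
    rw [followWalk_succ, ← Prod.mk.eta (p := followWalk seg a i), hi]
    simp only [followStep, hbq]
  rw [hbq] at hx
  rcases hx with _ | ⟨_, hx⟩
  · exact ⟨i + 1, by omega, by rw [hstep]⟩
  · obtain ⟨k, hk, hkx⟩ :=
      exists_followWalk_eq_of_mem_plan seg a (i + 1) x (by rw [hstep]; exact hx)
    exact ⟨k, by omega, hkx⟩

variable {seg} {r : α → α → Prop} {K : Set α}

theorem followStep_spec (hseg : ∀ a ∈ K, seg a ≠ [] ∧ IsChain r (a :: seg a))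
    {x : α × List α} (hx : x.1 ∈ K) (hc : IsChain r (x.1 :: x.2)) :
    r x.1 (followStep seg x).1 ∧ IsChain r ((followStep seg x).1 :: (followStep seg x).2) := by
  rcases x with ⟨v, _ | ⟨b, q⟩⟩
  · obtain ⟨hne, hvc⟩ := hseg v hx
    obtain ⟨b, q, hbq⟩ := exists_cons_of_ne_nil hne
    rw [hbq] at hvc
    simpa only [followStep, hbq] using isChain_cons_cons.mp hvc
  · exact isChain_cons_cons.mp hc

theorem exists_walk_visiting_segments (hseg : ∀ a ∈ K, seg a ≠ [] ∧ IsChain r (a :: seg a))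
    (hrK : ∀ a b, r a b → b ∈ K) {a : α} (ha : a ∈ K) :
    ∃ f : ℕ → α, f 0 = a ∧ (∀ j, r (f j) (f (j + 1))) ∧
      ∀ j, ∃ i ≥ j, ∀ x ∈ seg (f i), ∃ k > i, f k = x := by
  have hinv : ∀ j, (followWalk seg a j).1 ∈ K ∧
      IsChain r ((followWalk seg a j).1 :: (followWalk seg a j).2) := by
    intro j
    induction j with
    | zero => exact ⟨ha, .singleton a⟩
    | succ j ih =>
      have h := followStep_spec hseg ih.1 ih.2
      rw [followWalk_succ]
      exact ⟨hrK _ _ h.1, h.2⟩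
  refine ⟨fun j => (followWalk seg a j).1, rfl, fun j => ?_, fun j => ?_⟩
  · simpa only [followWalk_succ] using (followStep_spec hseg (hinv j).1 (hinv j).2).1
  · obtain ⟨i, hij, hi⟩ := exists_followWalk_plan_eq_nil seg a j
    exact ⟨i, hij, exists_followWalk_eq_of_mem_seg seg a hi⟩

end Walks

variable {P : Type} {S : Set (SNF P)}

section Restriction

variable {σ : ℕ → Set P} {U : Set P} {i : ℕ}

theorem Lit.holds_inter_iff {l : Lit P} (h : l.sym ∈ U) :
    Lit.holds (fun j => σ j ∩ U) i l ↔ Lit.holds σ i l := by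
  unfold Lit.holds
  split_ifs <;> simp [h]

theorem conjHolds_inter_iff {L : List (Lit P)} (h : ∀ l ∈ L, l.sym ∈ U) :
    conjHolds (fun j => σ j ∩ U) i L ↔ conjHolds σ i L :=
  forall₂_congr fun l hl => Lit.holds_inter_iff (h l hl)

theorem disjHolds_inter_iff {L : List (Lit P)} (h : ∀ l ∈ L, l.sym ∈ U) :
    disjHolds (fun j => σ j ∩ U) i L ↔ disjHolds σ i L :=
  exists_congr fun l => and_congr_right fun hl => Lit.holds_inter_iff (h l hl)

theorem SNF.holds_inter_iff {c : SNF P} (h : c.syms ⊆ U) :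
    c.holds (fun j => σ j ∩ U) i ↔ c.holds σ i := by
  cases c with
  | initial rhs => exact imp_congr_right fun _ => disjHolds_inter_iff fun l hl => h ⟨l, hl, rfl⟩
  | step lhs rhs =>
    exact imp_congr (conjHolds_inter_iff fun l hl => h ⟨l, mem_append_left _ hl, rfl⟩)
      (disjHolds_inter_iff fun l hl => h ⟨l, mem_append_right _ hl, rfl⟩)
  | sometime lhs ev =>
    exact imp_congr (conjHolds_inter_iff fun l hl => h ⟨l, mem_cons_of_mem _ hl, rfl⟩)
      (exists_congr fun _ => and_congr_right fun _ =>
        Lit.holds_inter_iff (h ⟨ev, mem_cons_self, rfl⟩))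

theorem IsModel.inter_symsOf (hσ : IsModel σ S) : IsModel (fun j => σ j ∩ symsOf S) S :=
  fun i c hc => (SNF.holds_inter_iff (Set.subset_biUnion_of_mem hc)).mpr (hσ i c hc)

end Restriction

theorem evLits_finite (hS : S.Finite) : (evLits S).Finite := by
  refine (hS.biUnion fun c _ => Set.Subsingleton.finite (s := {l | ∃ lhs, c = .sometime lhs l})
    ?_).subset ?_
  · rintro l ⟨lhs, rfl⟩ l' ⟨lhs', h⟩
    exact (SNF.sometime.inj h).2
  · rintro l ⟨lhs, h⟩
    exact Set.mem_biUnion h ⟨lhs, rfl⟩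

theorem inBG.snd_subset_evLits {n : BNode P} (h : inBG S n) : n.2 ⊆ evLits S := by
  obtain ⟨n₀, h0, hr⟩ := h
  induction hr with
  | refl => rw [h0.2.2]; rintro l ⟨lhs, hl, -⟩; exact ⟨lhs, hl⟩
  | tail _ hbc ih =>
    rw [hbc.2.2]
    rintro l (⟨hl, -⟩ | ⟨lhs, hl, -⟩)
    exacts [ih hl, ⟨lhs, hl⟩]

theorem bgEdge.mem_snd {n m : BNode P} {l : Lit P} (h : bgEdge S n m) (hl : l ∈ n.2)
    (hns : ¬ litSatV n.1 l) : l ∈ m.2 := by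
  rw [h.2.2]
  exact Or.inl ⟨hl, hns⟩

theorem List.IsChain.mem_snd_getLast {l : Lit P} :
    ∀ {n : BNode P} {c : List (BNode P)}, IsChain (bgEdge S) (n :: c) → l ∈ n.2 →
      (∀ m ∈ n :: c, ¬ litSatV m.1 l) → l ∈ ((n :: c).getLast (cons_ne_nil n c)).2
  | _, [], _, hl, _ => hl
  | n, _ :: _, hc, hl, hns => by
    rw [getLast_cons_cons]
    exact hc.tail.mem_snd_getLast ((isChain_cons_cons.mp hc).1.mem_snd hl (hns n mem_cons_self))
      fun m hm => hns m (mem_cons_of_mem _ hm)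

section FairPath

def bgEdgeIn (S : Set (SNF P)) (K : Set (BNode P)) (a b : BNode P) : Prop :=
  a ∈ K ∧ b ∈ K ∧ bgEdge S a b

def IsFairPath (S : Set (SNF P)) (F : ℕ → BNode P) : Prop :=
  (∀ j, bgEdge S (F j) (F (j + 1))) ∧ ∀ j, ∀ l ∈ (F j).2, ∃ k, j ≤ k ∧ litSatV (F k).1 l

variable {F : ℕ → BNode P}

theorem IsFairPath.isModel (h0 : bgInitial S (F 0)) (hF : IsFairPath S F) :
    IsModel (fun i => (F i).1) S := by
  intro i c hc
  cases c with
  | initial rhs => rintro rfl; exact h0.2.1 rhs hc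
  | step lhs rhs => exact (hF.1 i).2.1 lhs rhs hc
  | sometime lhs ev =>
    intro h
    refine hF.2 i ev ?_
    cases i with
    | zero => rw [h0.2.2]; exact ⟨lhs, hc, h⟩
    | succ j => rw [(hF.1 j).2.2]; exact Or.inr ⟨lhs, hc, h⟩

theorem IsFairPath.cons (hF : IsFairPath S F) {a : BNode P} (ha : bgEdge S a (F 0)) :
    IsFairPath S (fun | 0 => a | j + 1 => F j) := by
  refine ⟨fun | 0 => ha | j + 1 => hF.1 j, ?_⟩
  rintro (_ | j) l hl
  · by_cases hs : litSatV a.1 l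
    · exact ⟨0, le_rfl, hs⟩
    · obtain ⟨k, -, hk⟩ := hF.2 0 l (ha.mem_snd hl hs)
      exact ⟨k + 1, by omega, hk⟩
  · obtain ⟨k, hjk, hk⟩ := hF.2 j l hl
    exact ⟨k + 1, by omega, hk⟩

theorem exists_isFairPath_of_reflTransGen {a b : BNode P} (h : ReflTransGen (bgEdge S) a b)
    (hb : ∃ F, F 0 = b ∧ IsFairPath S F) : ∃ F, F 0 = a ∧ IsFairPath S F := by
  induction h using ReflTransGen.head_induction_on with
  | refl => exact hb
  | head hab _ ih =>
    obtain ⟨F, rfl, hF⟩ := ih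
    exact ⟨_, rfl, hF.cons hab⟩

theorem IsFairPath.goodSet_range (h0 : bgInitial S (F 0)) (hF : IsFairPath S F) :
    goodSet S (Set.range F) := by
  have hreach : ∀ {i k}, i ≤ k →
      ReflTransGen (bgEdgeIn S (Set.range F)) (F i) (F k) :=
    fun hik => (reflTransGen_of_succ_of_le (fun i k => bgEdge S (F i) (F k))
      (fun i _ => by simpa using hF.1 i) hik).lift F fun _ _ h => ⟨⟨_, rfl⟩, ⟨_, rfl⟩, h⟩
  refine ⟨?_, ?_, ?_⟩
  · rintro _ ⟨i, rfl⟩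
    exact ⟨F 0, h0, ReflTransGen.mono (fun _ _ h => h.2.2) _ _ (hreach (Nat.zero_le i))⟩
  · rintro _ ⟨i, rfl⟩
    exact ⟨F (i + 1), ⟨i + 1, rfl⟩, hF.1 i⟩
  · rintro _ ⟨i, rfl⟩ l hl
    obtain ⟨k, hik, hk⟩ := hF.2 i l hl
    exact ⟨F k, ⟨k, rfl⟩, hreach hik, hk⟩

theorem IsFairPath.mem_reducedBG (h0 : bgInitial S (F 0)) (hF : IsFairPath S F) (i : ℕ) :
    F i ∈ reducedBG S :=
  Set.mem_sUnion_of_mem (Set.mem_range_self i) (hF.goodSet_range h0)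

end FairPath

section GoodSet

variable {K : Set (BNode P)}

theorem goodSet.exists_segment (hK : goodSet S K) {n : BNode P} (hn : n ∈ K)
    (E : Finset (Lit P)) (hE : ↑E ⊆ n.2) :
    ∃ c ≠ [], IsChain (bgEdgeIn S K) (n :: c) ∧ ∀ l ∈ E, ∃ m ∈ n :: c, litSatV m.1 l := by
  classical
  induction E using Finset.induction_on with
  | empty =>
    obtain ⟨d, hd, hnd⟩ := hK.2.1 n hn
    exact ⟨[d], cons_ne_nil _ _, .cons_cons ⟨hn, hd, hnd⟩ (.singleton d), by simp⟩
  | insert l E _ ih =>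
    rw [Finset.coe_insert, Set.insert_subset_iff] at hE
    obtain ⟨c, hne, hc, hsat⟩ := ih hE.2
    simp_rw [Finset.forall_mem_insert]
    by_cases hl : ∃ m ∈ n :: c, litSatV m.1 l
    · exact ⟨c, hne, hc, hl, hsat⟩
    push Not at hl
    -- `l` is still outstanding at the end `z` of the segment, so `K` lets us walk on to it.
    set z := (n :: c).getLast (cons_ne_nil n c)
    have hzK : z ∈ K :=
      hc.induction (· ∈ K) _ (fun _ _ h _ => h.2.1) (fun _ => hn) z (getLast_mem _)
    have hlz : l ∈ z.2 := (hc.imp fun _ _ h => h.2.2).mem_snd_getLast hE.1 hl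
    obtain ⟨m, -, hzm, hm⟩ := hK.2.2 z hzK l hlz
    obtain ⟨d, hd, hdm⟩ := exists_isChain_cons_of_relationReflTransGen hzm
    refine ⟨c ++ d, by simp [hne], ?_, ⟨m, ?_, hm⟩, fun e he => ?_⟩
    · rw [← cons_append]
      refine hc.append hd.tail ?_
      rw [getLast?_eq_some_getLast (cons_ne_nil n c)]
      rintro _ ⟨⟩
      exact hd.rel_head?
    · rcases mem_cons.mp (hdm ▸ getLast_mem (cons_ne_nil z d)) with rfl | hmd
      · rw [← cons_append]; exact mem_append_left _ (getLast_mem _)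
      · exact mem_cons_of_mem _ (mem_append_right _ hmd)
    · obtain ⟨m', hm', hs⟩ := hsat e he
      rw [← cons_append]
      exact ⟨m', mem_append_left _ hm', hs⟩

theorem goodSet.exists_isFairPath (hK : goodSet S K) (hfin : (evLits S).Finite)
    {n : BNode P} (hn : n ∈ K) : ∃ F, F 0 = n ∧ IsFairPath S F := by
  have hseg : ∀ a, ∃ c, a ∈ K → c ≠ [] ∧ IsChain (bgEdgeIn S K) (a :: c) ∧
      ∀ l ∈ a.2, ∃ m ∈ a :: c, litSatV m.1 l := by
    intro a
    by_cases ha : a ∈ K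
    · have hfa : a.2.Finite := hfin.subset (hK.1 a ha).snd_subset_evLits
      obtain ⟨c, hne, hc, hsat⟩ := hK.exists_segment ha hfa.toFinset (by simp)
      exact ⟨c, fun _ => ⟨hne, hc, fun l hl => hsat l (by simpa using hl)⟩⟩
    · exact ⟨[], fun h => absurd h ha⟩
  choose seg hseg using hseg
  obtain ⟨F, rfl, hFe, hFseg⟩ := exists_walk_visiting_segments
    (fun a ha => ⟨(hseg a ha).1, (hseg a ha).2.1⟩) (fun _ _ h => h.2.1) hn
  refine ⟨F, rfl, fun j => (hFe j).2.2, fun j l hl => ?_⟩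
  by_contra! hnever
  have hpers : ∀ k ≥ j, l ∈ (F k).2 :=
    fun k hk => Nat.le_induction hl (fun k hk ih => (hFe k).2.2.mem_snd ih (hnever k hk)) k hk
  have hFK : ∀ i, F i ∈ K := fun | 0 => hn | i + 1 => (hFe i).2.1
  obtain ⟨i, hij, hi⟩ := hFseg j
  obtain ⟨m, hm, hsat⟩ := (hseg (F i) (hFK i)).2.2 l (hpers i hij)
  rcases mem_cons.mp hm with rfl | hm
  · exact hnever i hij hsat
  · obtain ⟨k, hk, rfl⟩ := hi m hm
    exact hnever k (by omega) hsat

theorem goodSet.exists_isModel (hS : S.Finite) (hK : goodSet S K) {n : BNode P} (hn : n ∈ K) :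
    ∃ σ : ℕ → Set P, IsModel σ S := by
  obtain ⟨n₀, hinit, hreach⟩ := hK.1 n hn
  obtain ⟨F, rfl, hF⟩ :=
    exists_isFairPath_of_reflTransGen hreach (hK.exists_isFairPath (evLits_finite hS) hn)
  exact ⟨_, hF.isModel hinit⟩

end GoodSet

section ModelPath

variable {σ : ℕ → Set P}

def outstanding (S : Set (SNF P)) (σ : ℕ → Set P) : ℕ → Set (Lit P)
  | 0 => evSet S (σ 0)
  | j + 1 => {l ∈ outstanding S σ j | ¬ litSatV (σ j) l} ∪ evSet S (σ (j + 1))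

theorem IsModel.exists_litSatV_of_mem_outstanding (hσ : IsModel σ S) :
    ∀ {j l}, l ∈ outstanding S σ j → ∃ k, j ≤ k ∧ litSatV (σ k) l
  | 0, _, ⟨_, hc, hlhs⟩ => hσ 0 _ hc hlhs
  | j + 1, l, .inl ⟨hl, hns⟩ => by
    obtain ⟨k, hjk, hk⟩ := hσ.exists_litSatV_of_mem_outstanding hl
    rcases hjk.eq_or_lt with rfl | hjk
    · exact absurd hk hns
    · exact ⟨k, hjk, hk⟩
  | j + 1, _, .inr ⟨_, hc, hlhs⟩ => hσ (j + 1) _ hc hlhs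

theorem IsModel.isFairPath_outstanding (hσ : IsModel σ S) (hsyms : ∀ i, σ i ⊆ symsOf S) :
    bgInitial S (σ 0, outstanding S σ 0) ∧ IsFairPath S fun i => (σ i, outstanding S σ i) :=
  ⟨⟨hsyms 0, fun _ hc => hσ 0 _ hc rfl, rfl⟩,
    fun i => ⟨hsyms (i + 1), fun _ _ hc => hσ i _ hc, rfl⟩,
    fun _ _ => hσ.exists_litSatV_of_mem_outstanding⟩

end ModelPath

theorem stmt_13_general {P : Type} (S : Set (SNF P)) (hS : S.Finite) :
    ((¬ ∃ σ : ℕ → Set P, IsModel σ S) ↔ reducedBG S = ∅) ∧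
    (reducedBG S ≠ ∅ →
      ∃ N : ℕ → BNode P,
        (∀ i : ℕ, N i ∈ reducedBG S) ∧
        bgInitial S (N 0) ∧
        (∀ i : ℕ, bgEdge S (N i) (N (i + 1))) ∧
        (∀ i : ℕ, ∀ l ∈ (N i).2, ∃ k, i ≤ k ∧ litSatV (N k).1 l) ∧
        IsModel (fun i => (N i).1) S) := by
  have hpath : ∀ σ : ℕ → Set P, IsModel σ S → ∃ N : ℕ → BNode P,
      (∀ i, N i ∈ reducedBG S) ∧ bgInitial S (N 0) ∧ (∀ i, bgEdge S (N i) (N (i + 1))) ∧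
        (∀ i, ∀ l ∈ (N i).2, ∃ k, i ≤ k ∧ litSatV (N k).1 l) ∧ IsModel (fun i => (N i).1) S := by
    intro σ hσ
    obtain ⟨h0, hN⟩ := hσ.inter_symsOf.isFairPath_outstanding fun _ => Set.inter_subset_right
    exact ⟨_, hN.mem_reducedBG h0, h0, hN.1, hN.2, hN.isModel h0⟩
  have hmodel : reducedBG S ≠ ∅ → ∃ σ : ℕ → Set P, IsModel σ S := by
    intro h
    obtain ⟨n, K, hK, hn⟩ := Set.nonempty_iff_ne_empty.mpr h
    exact hK.exists_isModel hS hn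
  refine ⟨⟨fun h => ?_, fun h hσ => ?_⟩, fun h => ?_⟩
  · by_contra hne
    exact h (hmodel hne)
  · obtain ⟨σ, hσ⟩ := hσ
    obtain ⟨N, hN, -⟩ := hpath σ hσ
    simpa [h] using hN 0
  · obtain ⟨σ, hσ⟩ := hmodel h
    exact hpath σ hσ

/-- a finite set `S` of SNF clauses is unsatisfiable iff its reduced
behaviour graph is empty; in particular, if the reduced behaviour graph is non-empty
then a model of `S` is obtained as an infinite path through the reduced behaviour
graph, starting at an initial node, along which every eventuality occurring in a node
of the path is satisfied at that node or at some later node. -/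
theorem stmt_13 {P : Type} [Countable P] (S : Set (SNF P)) (hS : S.Finite) :
    ((¬ ∃ σ : ℕ → Set P, IsModel σ S) ↔ reducedBG S = ∅) ∧
    (reducedBG S ≠ ∅ →
      ∃ N : ℕ → BNode P,
        (∀ i : ℕ, N i ∈ reducedBG S) ∧
        bgInitial S (N 0) ∧
        (∀ i : ℕ, bgEdge S (N i) (N (i + 1))) ∧
        (∀ i : ℕ, ∀ l ∈ (N i).2, ∃ k, i ≤ k ∧ litSatV (N k).1 l) ∧
        IsModel (fun i => (N i).1) S) :=
  stmt_13_general S hS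
end

section
/- Completeness of clausal temporal resolution: if a well-behaved augmented set S of SNF clauses is unsatisfiable, then the clause start ⇒ false is derivable from S in the temporal resolution calculus. -/
/-- The temporal resolution calculus over the clause set `S` (with augmentation
symbols `w`): a clause is derivable if it is in `S`, or obtained by initial
resolution, step resolution, rewriting of `A ⇒ ◯false`, classical simplification
(identification of clauses with the same underlying sets of literals), or temporal
resolution with a sometime clause of `S` against merged clauses (conjunctive
combinations of derived step clauses) satisfying the loop side conditions. -/
inductive Derives {P : Type} (S : Set (SNF P)) (w : Lit P → P) : SNF P → Prop
  | assumption {c : SNF P} : c ∈ S → Derives S w c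
  | initRes {A B : List (Lit P)} {l : Lit P} :
      Derives S w (.initial (l :: A)) → Derives S w (.initial (l.negate :: B)) →
      Derives S w (.initial (A ++ B))
  | stepRes {C D A B : List (Lit P)} {l : Lit P} :
      Derives S w (.step C (l :: A)) → Derives S w (.step D (l.negate :: B)) →
      Derives S w (.step (C ++ D) (A ++ B))
  | rewriteFalseInit {A : List (Lit P)} :
      Derives S w (.step A []) → Derives S w (.initial (A.map Lit.negate))
  | rewriteFalseStep {A : List (Lit P)} :
      Derives S w (.step A []) → Derives S w (.step [] (A.map Lit.negate))
  | simpInit {A B : List (Lit P)} :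
      Derives S w (.initial A) → (∀ l, l ∈ B ↔ l ∈ A) → Derives S w (.initial B)
  | simpStep {C D A B : List (Lit P)} :
      Derives S w (.step C A) → (∀ l, l ∈ D ↔ l ∈ C) → (∀ l, l ∈ B ↔ l ∈ A) →
      Derives S w (.step D B)
  | temporal {n : ℕ} {m : Fin (n + 1) → ℕ}
      {lhs rhs : (j : Fin (n + 1)) → Fin (m j + 1) → List (Lit P)}
      {C : List (Lit P)} {l : Lit P} {i : Fin (n + 1)} {c : SNF P} :
      (∀ (j : Fin (n + 1)) (k : Fin (m j + 1)), Derives S w (.step (lhs j k) (rhs j k))) →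
      SNF.sometime C l ∈ S →
      -- side condition: each Bⱼ ⇒ ¬l is propositionally valid
      (∀ (j : Fin (n + 1)) (V : Set P),
        (∀ k : Fin (m j + 1), disjSatV V (rhs j k)) → litSatV V l.negate) →
      -- side condition: each Bⱼ ⇒ (A₀ ∨ … ∨ Aₙ) is propositionally valid
      (∀ (j : Fin (n + 1)) (V : Set P),
        (∀ k : Fin (m j + 1), disjSatV V (rhs j k)) →
          ∃ j' : Fin (n + 1), ∀ k : Fin (m j' + 1), conjSatV V (lhs j' k)) →
      (c = SNF.initial
            (C.map Lit.negate ++ l :: ((List.ofFn (lhs i)).flatten.map Lit.negate)) ∨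
       c = SNF.step []
            (C.map Lit.negate ++ l :: ((List.ofFn (lhs i)).flatten.map Lit.negate)) ∨
       c = SNF.step [posLit (w l)] (l :: ((List.ofFn (lhs i)).flatten.map Lit.negate))) →
      Derives S w c

namespace TRC

variable {P : Type}

lemma holds_iff_sat (σ : ℕ → Set P) (i : ℕ) (x : Lit P) :
    Lit.holds σ i x ↔ litSatV (σ i) x := Iff.rfl

lemma litSatV_negate (V : Set P) (x : Lit P) :
    litSatV V x.negate ↔ ¬ litSatV V x := by
  cases x with
  | mk b s => cases b <;> simp [litSatV, Lit.negate]

lemma disjSatV_congr {V : Set P} {A B : List (Lit P)} (h : ∀ x, x ∈ A ↔ x ∈ B) :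
    disjSatV V A ↔ disjSatV V B := by
  unfold disjSatV
  constructor
  · rintro ⟨x, hx, hs⟩; exact ⟨x, (h x).mp hx, hs⟩
  · rintro ⟨x, hx, hs⟩; exact ⟨x, (h x).mpr hx, hs⟩

lemma conjSatV_congr {V : Set P} {A B : List (Lit P)} (h : ∀ x, x ∈ A ↔ x ∈ B) :
    conjSatV V A ↔ conjSatV V B := by
  unfold conjSatV; constructor <;> intro hh x hx
  · exact hh x ((h x).mpr hx)
  · exact hh x ((h x).mp hx)

lemma disjSatV_map_negate (V : Set P) (E : List (Lit P)) :
    disjSatV V (E.map Lit.negate) ↔ ¬ conjSatV V E := by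
  unfold disjSatV conjSatV
  constructor
  · rintro ⟨x, hx, hs⟩ hall
    rcases List.mem_map.mp hx with ⟨y, hy, rfl⟩
    exact (litSatV_negate V y).mp hs (hall y hy)
  · intro h
    obtain ⟨y, hy1, hy2⟩ : ∃ x ∈ E, ¬ litSatV V x := by simpa using h
    exact ⟨y.negate, List.mem_map_of_mem hy1, (litSatV_negate V y).mpr hy2⟩

/-- Propositional resolution completeness, abstractly over a derivability
predicate closed under binary resolution and same-membership replacement. -/
lemma resAux (Dv : List (Lit P) → Prop)
    (hres : ∀ (A B : List (Lit P)) (l : Lit P),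
      Dv (l :: A) → Dv (l.negate :: B) → Dv (A ++ B))
    (hsimp : ∀ (A B : List (Lit P)), Dv A → (∀ x, x ∈ B ↔ x ∈ A) → Dv B) :
    ∀ (ps : List P) (cs : List (List (Lit P))),
      (∀ c ∈ cs, Dv c) → (∀ c ∈ cs, ∀ x ∈ c, x.sym ∈ ps) →
      (∀ V : Set P, ∃ c ∈ cs, ¬ disjSatV V c) → Dv [] := by
  classical
  intro ps
  induction ps with
  | nil =>
    intro cs hDv hsyms hunsat
    rcases hunsat ∅ with ⟨c, hc, hcu⟩
    have : c = [] := by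
      cases c with
      | nil => rfl
      | cons x xs => exact absurd (hsyms _ hc x (by simp)) (by simp)
    exact this ▸ hDv c hc
  | cons p rest ih =>
    intro cs hDv hsyms hunsat
    set posL : Lit P := ⟨true, p⟩ with hposL
    set negL : Lit P := ⟨false, p⟩ with hnegL
    have hnegeq : posL.negate = negL := rfl
    -- p-free clauses
    let csA : List (List (Lit P)) := cs.filter (fun c => decide (posL ∉ c ∧ negL ∉ c))
    -- resolvents on p
    let csB : List (List (Lit P)) :=
      (cs.filter (fun c => decide (posL ∈ c ∧ negL ∉ c))).flatMap (fun c =>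
        (cs.filter (fun c' => decide (negL ∈ c' ∧ posL ∉ c'))).map (fun c' =>
          c.filter (fun x => decide (x ≠ posL)) ++ c'.filter (fun x => decide (x ≠ negL))))
    have hsymp : ∀ x : Lit P, x.sym = p → x = posL ∨ x = negL := by
      rintro ⟨b, s⟩ h
      have h' : s = p := h
      subst h'
      cases b
      · right; rfl
      · left; rfl
    -- Dv for members of csA ++ csB
    have hDv' : ∀ c ∈ csA ++ csB, Dv c := by
      intro c hc
      rcases List.mem_append.mp hc with hc | hc
      · exact hDv c (List.mem_filter.mp hc).1
      · rcases List.mem_flatMap.mp hc with ⟨c1, hc1, hc1'⟩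
        rcases List.mem_map.mp hc1' with ⟨c2, hc2, rfl⟩
        have h1 := List.mem_filter.mp hc1
        have h2 := List.mem_filter.mp hc2
        have h1p : posL ∈ c1 ∧ negL ∉ c1 := by simpa using h1.2
        have h2p : negL ∈ c2 ∧ posL ∉ c2 := by simpa using h2.2
        have d1 : Dv (posL :: c1.filter (fun x => decide (x ≠ posL))) := by
          refine hsimp _ _ (hDv c1 h1.1) ?_
          intro x
          simp only [List.mem_cons, List.mem_filter, decide_eq_true_iff]
          constructor
          · rintro (rfl | ⟨hx, _⟩)
            · exact h1p.1
            · exact hx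
          · intro hx
            by_cases hxp : x = posL
            · exact Or.inl hxp
            · exact Or.inr ⟨hx, hxp⟩
        have d2 : Dv (negL :: c2.filter (fun x => decide (x ≠ negL))) := by
          refine hsimp _ _ (hDv c2 h2.1) ?_
          intro x
          simp only [List.mem_cons, List.mem_filter, decide_eq_true_iff]
          constructor
          · rintro (rfl | ⟨hx, _⟩)
            · exact h2p.1
            · exact hx
          · intro hx
            by_cases hxp : x = negL
            · exact Or.inl hxp
            · exact Or.inr ⟨hx, hxp⟩
        exact hres _ _ posL d1 (hnegeq ▸ d2)
    -- symbols of csA ++ csB are in rest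
    have hsyms' : ∀ c ∈ csA ++ csB, ∀ x ∈ c, x.sym ∈ rest := by
      intro c hc x hx
      have hmain : x.sym ∈ p :: rest ∧ x ≠ posL ∧ x ≠ negL := by
        rcases List.mem_append.mp hc with hc | hc
        · have h1 := List.mem_filter.mp hc
          have hfree : posL ∉ c ∧ negL ∉ c := by simpa using h1.2
          exact ⟨hsyms c h1.1 x hx, fun h => hfree.1 (h ▸ hx), fun h => hfree.2 (h ▸ hx)⟩
        · rcases List.mem_flatMap.mp hc with ⟨c1, hc1, hc1'⟩
          rcases List.mem_map.mp hc1' with ⟨c2, hc2, rfl⟩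
          have h1 := List.mem_filter.mp hc1
          have h2 := List.mem_filter.mp hc2
          have h1p : posL ∈ c1 ∧ negL ∉ c1 := by simpa using h1.2
          have h2p : negL ∈ c2 ∧ posL ∉ c2 := by simpa using h2.2
          rcases List.mem_append.mp hx with hx | hx
          · have := List.mem_filter.mp hx
            have hxne : x ≠ posL := by simpa using this.2
            exact ⟨hsyms c1 h1.1 x this.1, hxne, fun h => h1p.2 (h ▸ this.1)⟩
          · have := List.mem_filter.mp hx
            have hxne : x ≠ negL := by simpa using this.2
            exact ⟨hsyms c2 h2.1 x this.1, fun h => h2p.2 (h ▸ this.1), hxne⟩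
      rcases hmain with ⟨hmem, hne1, hne2⟩
      rcases List.mem_cons.mp hmem with hp | hr
      · rcases hsymp x hp with rfl | rfl
        · exact absurd rfl hne1
        · exact absurd rfl hne2
      · exact hr
    -- unsatisfiability of csA ++ csB
    have hlit_indep : ∀ (V W : Set P) (x : Lit P), x ≠ posL → x ≠ negL →
        (∀ q, q ≠ p → (q ∈ V ↔ q ∈ W)) → litSatV V x → litSatV W x := by
      intro V W x hx1 hx2 hVW hs
      have hxs : x.sym ≠ p := fun h => by
        rcases hsymp x h with rfl | rfl
        · exact hx1 rfl
        · exact hx2 rfl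
      cases hb : x.pos
      · simp only [litSatV, hb, if_neg] at hs ⊢
        simpa using fun hmem => hs ((hVW _ hxs).mpr hmem)
      · simp only [litSatV, hb, if_pos] at hs ⊢
        exact (hVW _ hxs).mp hs
    have hunsat' : ∀ V : Set P, ∃ c ∈ csA ++ csB, ¬ disjSatV V c := by
      intro V
      have hV0 := hunsat (V \ {p})
      have hV1 := hunsat (V ∪ {p})
      rcases hV0 with ⟨c0, hc0, hc0u⟩
      rcases hV1 with ⟨c1, hc1, hc1u⟩
      have hVW0 : ∀ q, q ≠ p → (q ∈ V \ {p} ↔ q ∈ V) := by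
        intro q hq; simp [hq]
      have hVW1 : ∀ q, q ≠ p → (q ∈ V ∪ {p} ↔ q ∈ V) := by
        intro q hq; simp [hq]
      have hc0neg : negL ∉ c0 := by
        intro h
        exact hc0u ⟨negL, h, by simp [litSatV, hnegL]⟩
      have hc1pos : posL ∉ c1 := by
        intro h
        exact hc1u ⟨posL, h, by simp [litSatV, hposL]⟩
      by_cases hc0pos : posL ∈ c0
      · by_cases hc1neg : negL ∈ c1
        · -- resolvent
          refine ⟨c0.filter (fun x => decide (x ≠ posL)) ++
                  c1.filter (fun x => decide (x ≠ negL)), ?_, ?_⟩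
          · refine List.mem_append.mpr (Or.inr ?_)
            refine List.mem_flatMap.mpr ⟨c0, ?_, ?_⟩
            · exact List.mem_filter.mpr ⟨hc0, by simp [hc0pos, hc0neg]⟩
            · exact List.mem_map.mpr ⟨c1, List.mem_filter.mpr ⟨hc1, by simp [hc1neg, hc1pos]⟩, rfl⟩
          · rintro ⟨x, hx, hs⟩
            rcases List.mem_append.mp hx with hx | hx
            · have h := List.mem_filter.mp hx
              have hxne : x ≠ posL := by simpa using h.2
              have hxne2 : x ≠ negL := fun hh => hc0neg (hh ▸ h.1)
              exact hc0u ⟨x, h.1, hlit_indep V (V \ {p}) x hxne hxne2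
                (fun q hq => (hVW0 q hq).symm) hs⟩
            · have h := List.mem_filter.mp hx
              have hxne : x ≠ negL := by simpa using h.2
              have hxne2 : x ≠ posL := fun hh => hc1pos (hh ▸ h.1)
              exact hc1u ⟨x, h.1, hlit_indep V (V ∪ {p}) x hxne2 hxne
                (fun q hq => (hVW1 q hq).symm) hs⟩
        · -- c1 is p-free
          refine ⟨c1, List.mem_append.mpr (Or.inl (List.mem_filter.mpr ⟨hc1, by simp [hc1pos, hc1neg]⟩)), ?_⟩
          rintro ⟨x, hx, hs⟩
          have hxne1 : x ≠ posL := fun h => hc1pos (h ▸ hx)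
          have hxne2 : x ≠ negL := fun h => hc1neg (h ▸ hx)
          exact hc1u ⟨x, hx, hlit_indep V (V ∪ {p}) x hxne1 hxne2
            (fun q hq => (hVW1 q hq).symm) hs⟩
      · -- c0 is p-free
        refine ⟨c0, List.mem_append.mpr (Or.inl (List.mem_filter.mpr ⟨hc0, by simp [hc0pos, hc0neg]⟩)), ?_⟩
        rintro ⟨x, hx, hs⟩
        have hxne1 : x ≠ posL := fun h => hc0pos (h ▸ hx)
        have hxne2 : x ≠ negL := fun h => hc0neg (h ▸ hx)
        exact hc0u ⟨x, hx, hlit_indep V (V \ {p}) x hxne1 hxne2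
          (fun q hq => (hVW0 q hq).symm) hs⟩
    exact ih (csA ++ csB) hDv' hsyms' hunsat'

lemma resolutionComplete (Dv : List (Lit P) → Prop)
    (hres : ∀ (A B : List (Lit P)) (l : Lit P),
      Dv (l :: A) → Dv (l.negate :: B) → Dv (A ++ B))
    (hsimp : ∀ (A B : List (Lit P)), Dv A → (∀ x, x ∈ B ↔ x ∈ A) → Dv B)
    (cs : List (List (Lit P))) (hDv : ∀ c ∈ cs, Dv c)
    (hunsat : ∀ V : Set P, ∃ c ∈ cs, ¬ disjSatV V c) : Dv [] :=
  resAux Dv hres hsimp (cs.flatten.map Lit.sym) cs hDv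
    (fun c hc x hx => List.mem_map.mpr ⟨x, List.mem_flatten.mpr ⟨c, hc, hx⟩, rfl⟩)
    hunsat

end TRC
namespace TRC

variable {P : Type}

/-- Requirements on the ambient (augmented) clause set. -/
structure Setup (S : Set (SNF P)) (w : Lit P → P) : Prop where
  fin : (symsOf S).Finite
  wS : ∀ C (l : Lit P), SNF.sometime C l ∈ S → w l ∈ symsOf S
  aug_init : ∀ C (l : Lit P), SNF.sometime C l ∈ S →
    SNF.initial (C.map Lit.negate ++ [l, posLit (w l)]) ∈ S
  aug_step : ∀ C (l : Lit P), SNF.sometime C l ∈ S →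
    SNF.step [] (C.map Lit.negate ++ [l, posLit (w l)]) ∈ S
  aug_w : ∀ C (l : Lit P), SNF.sometime C l ∈ S →
    SNF.step [posLit (w l)] [l, posLit (w l)] ∈ S

variable {S : Set (SNF P)} {w : Lit P → P}

lemma mem_symsOf {c : SNF P} (hc : c ∈ S) : SNF.syms c ⊆ symsOf S :=
  Set.subset_biUnion_of_mem hc

lemma mem_syms_initial {r : List (Lit P)} {q : P} :
    q ∈ SNF.syms (SNF.initial r) ↔ ∃ x ∈ r, x.sym = q := Iff.rfl

lemma mem_syms_step {a b : List (Lit P)} {q : P} :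
    q ∈ SNF.syms (SNF.step a b) ↔ ∃ x ∈ a ++ b, x.sym = q := Iff.rfl

lemma mem_syms_sometime {a : List (Lit P)} {l : Lit P} {q : P} :
    q ∈ SNF.syms (SNF.sometime a l) ↔ ∃ x ∈ l :: a, x.sym = q := Iff.rfl

/-- Symbols of derived clauses stay within the symbols of `S`. -/
lemma derives_syms (hwS : ∀ C (l : Lit P), SNF.sometime C l ∈ S → w l ∈ symsOf S)
    {c : SNF P} (h : Derives S w c) : SNF.syms c ⊆ symsOf S := by
  induction h with
  | assumption hc => exact mem_symsOf hc
  | @initRes A B l _ _ ih1 ih2 =>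
    intro q hq
    rcases mem_syms_initial.mp hq with ⟨x, hx, rfl⟩
    rcases List.mem_append.mp hx with hx | hx
    · exact ih1 (mem_syms_initial.mpr ⟨x, List.mem_cons_of_mem _ hx, rfl⟩)
    · exact ih2 (mem_syms_initial.mpr ⟨x, List.mem_cons_of_mem _ hx, rfl⟩)
  | @stepRes C D A B l _ _ ih1 ih2 =>
    intro q hq
    rcases mem_syms_step.mp hq with ⟨x, hx, rfl⟩
    rcases List.mem_append.mp hx with hx | hx
    · rcases List.mem_append.mp hx with hx | hx
      · exact ih1 (mem_syms_step.mpr ⟨x, List.mem_append.mpr (Or.inl hx), rfl⟩)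
      · exact ih2 (mem_syms_step.mpr ⟨x, List.mem_append.mpr (Or.inl hx), rfl⟩)
    · rcases List.mem_append.mp hx with hx | hx
      · exact ih1 (mem_syms_step.mpr
          ⟨x, List.mem_append.mpr (Or.inr (List.mem_cons_of_mem _ hx)), rfl⟩)
      · exact ih2 (mem_syms_step.mpr
          ⟨x, List.mem_append.mpr (Or.inr (List.mem_cons_of_mem _ hx)), rfl⟩)
  | @rewriteFalseInit A _ ih =>
    intro q hq
    rcases mem_syms_initial.mp hq with ⟨x, hx, rfl⟩
    rcases List.mem_map.mp hx with ⟨y, hy, rfl⟩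
    exact ih (mem_syms_step.mpr ⟨y, List.mem_append.mpr (Or.inl hy), rfl⟩)
  | @rewriteFalseStep A _ ih =>
    intro q hq
    rcases mem_syms_step.mp hq with ⟨x, hx, rfl⟩
    have hx' : x ∈ A.map Lit.negate := by simpa using hx
    rcases List.mem_map.mp hx' with ⟨y, hy, rfl⟩
    exact ih (mem_syms_step.mpr ⟨y, List.mem_append.mpr (Or.inl hy), rfl⟩)
  | @simpInit A B _ hBA ih =>
    intro q hq
    rcases mem_syms_initial.mp hq with ⟨x, hx, rfl⟩
    exact ih (mem_syms_initial.mpr ⟨x, (hBA x).mp hx, rfl⟩)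
  | @simpStep C D A B _ hDC hBA ih =>
    intro q hq
    rcases mem_syms_step.mp hq with ⟨x, hx, rfl⟩
    rcases List.mem_append.mp hx with hx | hx
    · exact ih (mem_syms_step.mpr ⟨x, List.mem_append.mpr (Or.inl ((hDC x).mp hx)), rfl⟩)
    · exact ih (mem_syms_step.mpr ⟨x, List.mem_append.mpr (Or.inr ((hBA x).mp hx)), rfl⟩)
  | @temporal n m lhs rhs C l i c _ hC _ _ hcases ih =>
    have hCl : ∀ x ∈ l :: C, x.sym ∈ symsOf S := by
      intro x hx
      exact mem_symsOf hC (mem_syms_sometime.mpr ⟨x, hx, rfl⟩)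
    have hlhs : ∀ x ∈ (List.ofFn (lhs i)).flatten, x.sym ∈ symsOf S := by
      intro x hx
      rcases List.mem_flatten.mp hx with ⟨L, hL, hxL⟩
      rcases List.mem_ofFn.mp hL with ⟨k, rfl⟩
      exact ih i k (mem_syms_step.mpr ⟨x, List.mem_append.mpr (Or.inl hxL), rfl⟩)
    have hwl : (posLit (w l)).sym ∈ symsOf S := hwS C l hC
    rcases hcases with rfl | rfl | rfl
    · intro q hq
      rcases mem_syms_initial.mp hq with ⟨x, hx, rfl⟩
      rcases List.mem_append.mp hx with hx | hx
      · rcases List.mem_map.mp hx with ⟨y, hy, rfl⟩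
        exact hCl y (List.mem_cons_of_mem _ hy)
      · rcases List.mem_cons.mp hx with rfl | hx
        · exact hCl x (List.mem_cons_self)
        · rcases List.mem_map.mp hx with ⟨y, hy, rfl⟩
          exact hlhs y hy
    · intro q hq
      rcases mem_syms_step.mp hq with ⟨x, hx, rfl⟩
      have hx' : x ∈ C.map Lit.negate ++ l :: (List.ofFn (lhs i)).flatten.map Lit.negate := by
        simpa using hx
      rcases List.mem_append.mp hx' with hx | hx
      · rcases List.mem_map.mp hx with ⟨y, hy, rfl⟩
        exact hCl y (List.mem_cons_of_mem _ hy)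
      · rcases List.mem_cons.mp hx with rfl | hx
        · exact hCl x (List.mem_cons_self)
        · rcases List.mem_map.mp hx with ⟨y, hy, rfl⟩
          exact hlhs y hy
    · intro q hq
      rcases mem_syms_step.mp hq with ⟨x, hx, rfl⟩
      rcases List.mem_append.mp hx with hx | hx
      · rcases List.mem_cons.mp hx with rfl | hx
        · exact hwl
        · simp at hx
      · rcases List.mem_cons.mp hx with rfl | hx
        · exact hCl x (List.mem_cons_self)
        · rcases List.mem_map.mp hx with ⟨y, hy, rfl⟩
          exact hlhs y hy

/-- `U` is a legal successor valuation of `V`. -/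
def legal (S : Set (SNF P)) (w : Lit P → P) (V U : Set P) : Prop :=
  ∀ lhs rhs, Derives S w (.step lhs rhs) → conjSatV V lhs → disjSatV U rhs

/-- A valuation from which the eventuality `l` is reachable through legal steps. -/
inductive Reach (S : Set (SNF P)) (w : Lit P → P) (l : Lit P) : Set P → Prop
  | base {V : Set P} : litSatV V l → Reach S w l V
  | next {V U : Set P} : U ⊆ symsOf S → legal S w V U → Reach S w l U → Reach S w l V

/-- Dead-end valuations for the eventuality `l`. -/
def Bad (S : Set (SNF P)) (w : Lit P → P) (l : Lit P) : Set (Set P) :=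
  {V | V ⊆ symsOf S ∧ ¬ Reach S w l V}

lemma legal_okS {V U : Set P} (h : legal S w V U) :
    ∀ r, Derives S w (.step [] r) → disjSatV U r :=
  fun r hr => h [] r hr (fun x hx => absurd hx List.not_mem_nil)

/-- Transfer of literal satisfaction between a valuation and its restriction. -/
lemma litSatV_inter {V : Set P} {Sig : Set P} {x : Lit P} (hx : x.sym ∈ Sig) :
    litSatV (V ∩ Sig) x ↔ litSatV V x := by
  cases hb : x.pos <;> simp [litSatV, hb, hx]

lemma conjSatV_inter {V : Set P} {Sig : Set P} {L : List (Lit P)}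
    (hx : ∀ x ∈ L, x.sym ∈ Sig) : conjSatV (V ∩ Sig) L ↔ conjSatV V L := by
  unfold conjSatV
  exact forall₂_congr (fun x hxL => litSatV_inter (hx x hxL))

lemma disjSatV_inter {V : Set P} {Sig : Set P} {L : List (Lit P)}
    (hx : ∀ x ∈ L, x.sym ∈ Sig) : disjSatV (V ∩ Sig) L ↔ disjSatV V L := by
  unfold disjSatV
  constructor
  · rintro ⟨x, hxL, hs⟩; exact ⟨x, hxL, (litSatV_inter (hx x hxL)).mp hs⟩
  · rintro ⟨x, hxL, hs⟩; exact ⟨x, hxL, (litSatV_inter (hx x hxL)).mpr hs⟩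

end TRC
namespace TRC

variable {P : Type} {S : Set (SNF P)} {w : Lit P → P}

lemma litsFin (st : Setup S w) : {x : Lit P | x.sym ∈ symsOf S}.Finite := by
  have : {x : Lit P | x.sym ∈ symsOf S} ⊆
      (fun p : Bool × P => Lit.mk p.1 p.2) '' ((Set.univ : Set Bool) ×ˢ symsOf S) := by
    rintro ⟨b, s⟩ hs
    exact ⟨(b, s), ⟨trivial, hs⟩, rfl⟩
  exact Set.Finite.subset ((Set.finite_univ.prod st.fin).image _) this

lemma conjSatV_append {V : Set P} {A B : List (Lit P)}
    (hA : conjSatV V A) (hB : conjSatV V B) : conjSatV V (A ++ B) := by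
  intro x hx
  rcases List.mem_append.mp hx with hx | hx
  · exact hA x hx
  · exact hB x hx

lemma enum_of_finite {α : Type} {T : Set α} (hfin : T.Finite) {a : α} (ha : a ∈ T) :
    ∃ (n : ℕ) (f : Fin (n + 1) → α), (∀ k, f k ∈ T) ∧ ∀ x ∈ T, ∃ k, f k = x := by
  classical
  set L := hfin.toFinset.toList with hL
  have hmem : ∀ x, x ∈ L ↔ x ∈ T := by
    intro x
    rw [hL, Finset.mem_toList, Set.Finite.mem_toFinset]
  have hlen : 0 < L.length :=
    List.length_pos_iff.mpr (fun h => absurd ((hmem a).mpr ha) (by simp [h]))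
  refine ⟨L.length - 1, fun k => L.get ⟨k.val, by omega⟩, ?_, ?_⟩
  · intro k
    exact (hmem _).mp (List.get_mem _ _)
  · intro x hx
    rcases List.mem_iff_get.mp ((hmem x).mpr hx) with ⟨idx, hidx⟩
    exact ⟨⟨idx.val, by omega⟩, hidx⟩

/-- If `start ⇒ false` is not derivable, some valuation within the symbols of `S`
satisfies all derived initial clauses. -/
lemma exists_V0 (st : Setup S w) (h : ¬ Derives S w (.initial [])) :
    ∃ V, V ⊆ symsOf S ∧ ∀ r, Derives S w (.initial r) → disjSatV V r := by
  classical
  by_contra hno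
  push_neg at hno
  have hsyms : ∀ {c : SNF P}, Derives S w c → SNF.syms c ⊆ symsOf S :=
    fun h => derives_syms st.wS h
  have hall : ∀ V : Set P, ∃ r, Derives S w (.initial r) ∧ ¬ disjSatV V r := by
    intro V
    rcases hno (V ∩ symsOf S) Set.inter_subset_right with ⟨r, hr, hru⟩
    refine ⟨r, hr, fun hd => hru ?_⟩
    have hrs : ∀ x ∈ r, x.sym ∈ symsOf S := by
      intro x hx
      exact hsyms (hr) (mem_syms_initial.mpr ⟨x, hx, rfl⟩)
    exact (disjSatV_inter hrs).mpr hd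
  set T : Set (Set (Lit P)) := {s | ∃ r, Derives S w (.initial r) ∧ ∀ x, x ∈ r ↔ x ∈ s}
    with hT
  have hTfin : T.Finite := by
    refine Set.Finite.subset (Set.Finite.finite_subsets (litsFin st)) ?_
    rintro s ⟨r, hr, hrs⟩ x hx
    exact hsyms hr (mem_syms_initial.mpr ⟨x, (hrs x).mpr hx, rfl⟩)
  have hrep : ∀ s ∈ T, ∃ r, Derives S w (.initial r) ∧ ∀ x, x ∈ r ↔ x ∈ s := fun s hs => hs
  set rep : Set (Lit P) → List (Lit P) := fun s =>
    if hs : s ∈ T then (hrep s hs).choose else [] with hrepdef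
  set cs : List (List (Lit P)) := hTfin.toFinset.toList.map rep with hcs
  have hDv : ∀ c ∈ cs, Derives S w (.initial c) := by
    intro c hc
    rcases List.mem_map.mp hc with ⟨s, hs, rfl⟩
    have hsT : s ∈ T := by
      rwa [Finset.mem_toList, Set.Finite.mem_toFinset] at hs
    rw [hrepdef]
    simp only [dif_pos hsT]
    exact (hrep s hsT).choose_spec.1
  have hcsu : ∀ V : Set P, ∃ c ∈ cs, ¬ disjSatV V c := by
    intro V
    rcases hall V with ⟨r, hr, hru⟩
    have hsT : {x | x ∈ r} ∈ T := ⟨r, hr, fun x => Iff.rfl⟩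
    refine ⟨rep {x | x ∈ r}, List.mem_map.mpr ⟨{x | x ∈ r},
      by rw [Finset.mem_toList, Set.Finite.mem_toFinset]; exact hsT, rfl⟩, fun hd => hru ?_⟩
    have := (hrep _ hsT).choose_spec.2
    rw [hrepdef] at hd
    simp only [dif_pos hsT] at hd
    exact (disjSatV_congr (fun x => ((hrep _ hsT).choose_spec.2 x))).mp hd
  exact h (resolutionComplete (fun r => Derives S w (.initial r))
    (fun A B l h1 h2 => Derives.initRes h1 h2)
    (fun A B hA hBA => Derives.simpInit hA hBA) cs hDv hcsu)

/-- Every valuation not firing a derived `⇒ ◯false` clause has a legal successor. -/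
lemma exists_succ (st : Setup S w) {V : Set P}
    (hV : ∀ E, Derives S w (.step E []) → ¬ conjSatV V E) :
    ∃ U, U ⊆ symsOf S ∧ legal S w V U := by
  classical
  have hsyms : ∀ {c : SNF P}, Derives S w c → SNF.syms c ⊆ symsOf S :=
    fun h => derives_syms st.wS h
  by_cases hW : ∃ W : Set P, ∀ a b, Derives S w (.step a b) → conjSatV V a → disjSatV W b
  · rcases hW with ⟨W, hWl⟩
    refine ⟨W ∩ symsOf S, Set.inter_subset_right, ?_⟩
    intro a b hd hc
    have hbs : ∀ x ∈ b, x.sym ∈ symsOf S := by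
      intro x hx
      exact hsyms hd (mem_syms_step.mpr ⟨x, List.mem_append.mpr (Or.inr hx), rfl⟩)
    exact (disjSatV_inter hbs).mpr (hWl a b hd hc)
  · push_neg at hW
    set Dv : List (Lit P) → Prop := fun r => ∃ E, conjSatV V E ∧ Derives S w (.step E r)
      with hDvdef
    set T : Set (Set (Lit P)) :=
      {s | ∃ a b, Derives S w (.step a b) ∧ conjSatV V a ∧ ∀ x, x ∈ b ↔ x ∈ s} with hT
    have hTfin : T.Finite := by
      refine Set.Finite.subset (Set.Finite.finite_subsets (litsFin st)) ?_
      rintro s ⟨a, b, hd, _, hbs⟩ x hx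
      exact hsyms hd (mem_syms_step.mpr ⟨x, List.mem_append.mpr (Or.inr ((hbs x).mpr hx)), rfl⟩)
    have hrep : ∀ s ∈ T, ∃ a b, Derives S w (.step a b) ∧ conjSatV V a ∧ ∀ x, x ∈ b ↔ x ∈ s :=
      fun s hs => hs
    set rep : Set (Lit P) → List (Lit P) := fun s =>
      if hs : s ∈ T then (hrep s hs).choose_spec.choose else [] with hrepdef
    set cs : List (List (Lit P)) := hTfin.toFinset.toList.map rep with hcs
    have hDvcs : ∀ c ∈ cs, Dv c := by
      intro c hc
      rcases List.mem_map.mp hc with ⟨s, hs, rfl⟩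
      have hsT : s ∈ T := by
        rwa [Finset.mem_toList, Set.Finite.mem_toFinset] at hs
      rw [hrepdef]
      simp only [dif_pos hsT]
      obtain ⟨hd, hcj, _⟩ := (hrep s hsT).choose_spec.choose_spec
      exact ⟨_, hcj, hd⟩
    have hcsu : ∀ W : Set P, ∃ c ∈ cs, ¬ disjSatV W c := by
      intro W
      rcases hW W with ⟨a, b, hd, hcj, hbu⟩
      have hsT : {x | x ∈ b} ∈ T := ⟨a, b, hd, hcj, fun x => Iff.rfl⟩
      refine ⟨rep {x | x ∈ b}, List.mem_map.mpr ⟨{x | x ∈ b},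
        by rw [Finset.mem_toList, Set.Finite.mem_toFinset]; exact hsT, rfl⟩, fun hdj => hbu ?_⟩
      obtain ⟨_, _, hmem⟩ := (hrep _ hsT).choose_spec.choose_spec
      rw [hrepdef] at hdj
      simp only [dif_pos hsT] at hdj
      exact (disjSatV_congr (fun x => hmem x)).mp hdj
    have hres : ∀ (A B : List (Lit P)) (l : Lit P),
        Dv (l :: A) → Dv (l.negate :: B) → Dv (A ++ B) := by
      rintro A B l ⟨E1, h1, d1⟩ ⟨E2, h2, d2⟩
      exact ⟨E1 ++ E2, conjSatV_append h1 h2, Derives.stepRes d1 d2⟩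
    have hsimp : ∀ (A B : List (Lit P)), Dv A → (∀ x, x ∈ B ↔ x ∈ A) → Dv B := by
      rintro A B ⟨E, hE, dE⟩ hBA
      exact ⟨E, hE, Derives.simpStep dE (fun _ => Iff.rfl) hBA⟩
    rcases resolutionComplete Dv hres hsimp cs hDvcs hcsu with ⟨E, hE, dE⟩
    exact absurd hE (hV E dE)

/-- The temporal resolution rule applied to the loop formed by `Bad S w l`. -/
lemma temporalResolvents (st : Setup S w) {C : List (Lit P)} {l : Lit P}
    (hC : SNF.sometime C l ∈ S) {U : Set P} (hU : U ∈ Bad S w l) :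
    ∃ AU : List (Lit P), conjSatV U AU ∧
      Derives S w (.initial (C.map Lit.negate ++ l :: AU.map Lit.negate)) ∧
      Derives S w (.step [] (C.map Lit.negate ++ l :: AU.map Lit.negate)) ∧
      Derives S w (.step [posLit (w l)] (l :: AU.map Lit.negate)) := by
  classical
  have hsyms : ∀ {c : SNF P}, Derives S w c → SNF.syms c ⊆ symsOf S :=
    fun h => derives_syms st.wS h
  have hlsym : l.sym ∈ symsOf S :=
    mem_symsOf hC (mem_syms_sometime.mpr ⟨l, List.mem_cons_self, rfl⟩)
  -- enumerate Bad S w l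
  have hBadfin : (Bad S w l).Finite := by
    refine Set.Finite.subset (Set.Finite.finite_subsets st.fin) ?_
    rintro V ⟨hV, _⟩
    exact hV
  obtain ⟨n, f, hfmem, hfsurj⟩ := enum_of_finite hBadfin hU
  -- enumerate fired derived step clauses at each node
  have hFired : ∀ j : Fin (n + 1), ∃ (mj : ℕ) (gj : Fin (mj + 1) → Set (Lit P) × Set (Lit P)),
      (∀ k, ∃ a b, Derives S w (.step a b) ∧ conjSatV (f j) a ∧
        (∀ x, x ∈ a ↔ x ∈ (gj k).1) ∧ (∀ x, x ∈ b ↔ x ∈ (gj k).2)) ∧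
      (∀ a b, Derives S w (.step a b) → conjSatV (f j) a →
        ∃ k, (∀ x, x ∈ a ↔ x ∈ (gj k).1) ∧ (∀ x, x ∈ b ↔ x ∈ (gj k).2)) := by
    intro j
    set Fired : Set (Set (Lit P) × Set (Lit P)) :=
      {pr | ∃ a b, Derives S w (.step a b) ∧ conjSatV (f j) a ∧
        (∀ x, x ∈ a ↔ x ∈ pr.1) ∧ (∀ x, x ∈ b ↔ x ∈ pr.2)} with hFdef
    have hFfin : Fired.Finite := by
      refine Set.Finite.subset (Set.Finite.prod (Set.Finite.finite_subsets (litsFin st))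
        (Set.Finite.finite_subsets (litsFin st))) ?_
      rintro ⟨s1, s2⟩ ⟨a, b, hd, _, hma, hmb⟩
      constructor
      · intro x hx
        exact hsyms hd (mem_syms_step.mpr
          ⟨x, List.mem_append.mpr (Or.inl ((hma x).mpr hx)), rfl⟩)
      · intro x hx
        exact hsyms hd (mem_syms_step.mpr
          ⟨x, List.mem_append.mpr (Or.inr ((hmb x).mpr hx)), rfl⟩)
    have hne : ({x | x ∈ ([] : List (Lit P))},
        {x | x ∈ C.map Lit.negate ++ [l, posLit (w l)]}) ∈ Fired := by
      refine ⟨[], C.map Lit.negate ++ [l, posLit (w l)], ?_, ?_, fun x => Iff.rfl,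
        fun x => Iff.rfl⟩
      · exact Derives.assumption (st.aug_step C l hC)
      · intro x hx
        exact absurd hx List.not_mem_nil
    obtain ⟨mj, gj, hg1, hg2⟩ := enum_of_finite hFfin hne
    refine ⟨mj, gj, fun k => hg1 k, ?_⟩
    intro a b hd hcj
    obtain ⟨k, hk⟩ := hg2 ({x | x ∈ a}, {x | x ∈ b}) ⟨a, b, hd, hcj, fun _ => Iff.rfl,
      fun _ => Iff.rfl⟩
    refine ⟨k, ?_, ?_⟩
    · intro x; rw [hk]; exact Iff.rfl
    · intro x; rw [hk]; exact Iff.rfl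
  choose m g hg1 hg2 using hFired
  choose lhsF rhsF hDer hConj hmA hmB using hg1
  -- side condition (a)
  have sideA : ∀ (j : Fin (n + 1)) (V : Set P),
      (∀ k : Fin (m j + 1), disjSatV V (rhsF j k)) → litSatV V l.negate := by
    intro j V hall
    set V' : Set P := V ∩ symsOf S with hV'
    have hlegal : legal S w (f j) V' := by
      intro a b hd hcj
      obtain ⟨k, hka, hkb⟩ := hg2 j a b hd hcj
      have hbs : ∀ x ∈ b, x.sym ∈ symsOf S := by
        intro x hx
        exact hsyms hd (mem_syms_step.mpr ⟨x, List.mem_append.mpr (Or.inr hx), rfl⟩)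
      refine (disjSatV_inter hbs).mpr ?_
      exact (disjSatV_congr (fun x => (hmB j k x).trans (hkb x).symm)).mp (hall k)
    have hnR : ¬ Reach S w l V' := fun h =>
      (hfmem j).2 (Reach.next Set.inter_subset_right hlegal h)
    have hnl : ¬ litSatV V' l := fun h => hnR (Reach.base h)
    rw [litSatV_negate]
    intro h
    exact hnl ((litSatV_inter hlsym).mpr h)
  -- side condition (b)
  have sideB : ∀ (j : Fin (n + 1)) (V : Set P),
      (∀ k : Fin (m j + 1), disjSatV V (rhsF j k)) →
        ∃ j' : Fin (n + 1), ∀ k : Fin (m j' + 1), conjSatV V (lhsF j' k) := by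
    intro j V hall
    set V' : Set P := V ∩ symsOf S with hV'
    have hlegal : legal S w (f j) V' := by
      intro a b hd hcj
      obtain ⟨k, hka, hkb⟩ := hg2 j a b hd hcj
      have hbs : ∀ x ∈ b, x.sym ∈ symsOf S := by
        intro x hx
        exact hsyms hd (mem_syms_step.mpr ⟨x, List.mem_append.mpr (Or.inr hx), rfl⟩)
      refine (disjSatV_inter hbs).mpr ?_
      exact (disjSatV_congr (fun x => (hmB j k x).trans (hkb x).symm)).mp (hall k)
    have hnR : ¬ Reach S w l V' := fun h =>
      (hfmem j).2 (Reach.next Set.inter_subset_right hlegal h)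
    have hV'Bad : V' ∈ Bad S w l := ⟨Set.inter_subset_right, hnR⟩
    obtain ⟨j', hj'⟩ := hfsurj V' hV'Bad
    refine ⟨j', fun k => ?_⟩
    have hcj : conjSatV V' (lhsF j' k) := by
      have := hConj j' k
      rw [hj'] at this
      exact this
    have has : ∀ x ∈ lhsF j' k, x.sym ∈ symsOf S := by
      intro x hx
      exact hsyms (hDer j' k) (mem_syms_step.mpr ⟨x, List.mem_append.mpr (Or.inl hx), rfl⟩)
    exact (conjSatV_inter has).mp hcj
  obtain ⟨i, hi⟩ := hfsurj U hU
  refine ⟨(List.ofFn (lhsF i)).flatten, ?_, ?_, ?_, ?_⟩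
  · intro x hx
    rcases List.mem_flatten.mp hx with ⟨L, hL, hxL⟩
    rcases List.mem_ofFn.mp hL with ⟨k, rfl⟩
    have := hConj i k
    rw [hi] at this
    exact this x hxL
  · exact Derives.temporal (fun j k => hDer j k) hC sideA sideB (Or.inl rfl)
  · exact Derives.temporal (fun j k => hDer j k) hC sideA sideB (Or.inr (Or.inl rfl))
  · exact Derives.temporal (fun j k => hDer j k) hC sideA sideB (Or.inr (Or.inr rfl))

end TRC
namespace TRC

variable {P : Type} {S : Set (SNF P)} {w : Lit P → P}

lemma litSatV_posLit {V : Set P} {p : P} : litSatV V (posLit p) ↔ p ∈ V := by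
  simp [litSatV, posLit]

/-- Extract a finite legal chain from a `Reach` certificate. -/
lemma reach_chain {l : Lit P} {V : Set P} (h : Reach S w l V) :
    ∃ (k : ℕ) (g : ℕ → Set P), g 0 = V ∧
      (∀ i, i < k → legal S w (g i) (g (i + 1)) ∧ g (i + 1) ⊆ symsOf S) ∧
      litSatV (g k) l := by
  induction h with
  | @base V hV => exact ⟨0, fun _ => V, rfl, fun i hi => absurd hi (by omega), hV⟩
  | @next V U hUS2 hleg _ ih =>
    obtain ⟨k, g, hg0, hgs, hgl⟩ := ih
    refine ⟨k + 1, fun i => if i = 0 then V else g (i - 1), by simp, ?_, by simp [hgl]⟩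
    intro i hi
    cases i with
    | zero => simpa [hg0] using ⟨hleg, hUS2⟩
    | succ j =>
      have hj : j < k := by omega
      simpa using hgs j hj

/-- A good finite prefix of a model under construction. -/
def GoodPre (S : Set (SNF P)) (w : Lit P → P) (V₀ : Set P) (f : ℕ → Set P)
    (t : ℕ) : Prop :=
  f 0 = V₀ ∧ ∀ i, i < t → legal S w (f i) (f (i + 1)) ∧ f (i + 1) ⊆ symsOf S

/-- One extension step of a good prefix, fulfilling a scheduled eventuality if needed. -/
lemma extend (st : Setup S w) {V₀ : Set P} (hV0S2 : V₀ ⊆ symsOf S)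
    (hV₀ : ∀ r, Derives S w (.initial r) → disjSatV V₀ r)
    {f : ℕ → Set P} {t : ℕ} (hf : GoodPre S w V₀ f t) (lo : Option (Lit P)) :
    ∃ (f' : ℕ → Set P) (t' : ℕ), GoodPre S w V₀ f' t' ∧ t < t' ∧
      (∀ i, i ≤ t → f' i = f i) ∧
      (∀ l : Lit P, lo = some l →
        (w l ∈ f t ∧ ¬ litSatV (f t) l ∧ f t ∉ Bad S w l) →
        ∃ i, t < i ∧ i ≤ t' ∧ litSatV (f' i) l) := by
  classical
  have hVS2 : f t ⊆ symsOf S := by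
    cases t with
    | zero => exact hf.1 ▸ hV0S2
    | succ s => exact (hf.2 s (by omega)).2
  have hnofalse : ∀ E, Derives S w (.step E []) → ¬ conjSatV (f t) E := by
    cases t with
    | zero =>
      intro E hd hc
      have := hV₀ _ (Derives.rewriteFalseInit hd)
      rw [hf.1] at hc
      exact (disjSatV_map_negate _ _).mp this hc
    | succ s =>
      intro E hd hc
      have := (hf.2 s (by omega)).1 [] (E.map Lit.negate) (Derives.rewriteFalseStep hd)
        (fun x hx => absurd hx List.not_mem_nil)
      exact (disjSatV_map_negate _ _).mp this hc
  by_cases hcase : ∃ l : Lit P, lo = some l ∧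
      (w l ∈ f t ∧ ¬ litSatV (f t) l ∧ f t ∉ Bad S w l)
  · obtain ⟨l, hlo, hwl, hnl, hnB⟩ := hcase
    have hR : Reach S w l (f t) := by
      by_contra hnR
      exact hnB ⟨hVS2, hnR⟩
    obtain ⟨k, g, hg0, hgs, hgl⟩ := reach_chain hR
    have hk : 1 ≤ k := by
      rcases Nat.eq_zero_or_pos k with rfl | hk
      · exact absurd (hg0 ▸ hgl) hnl
      · exact hk
    refine ⟨fun i => if i ≤ t then f i else g (min (i - t) k), t + k, ⟨?_, ?_⟩, by omega,
      ?_, ?_⟩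
    · simp [hf.1]
    · intro i hi
      rcases lt_trichotomy i t with hit | rfl | hit
      · have h1 : i ≤ t := by omega
        have h2 : i + 1 ≤ t := by omega
        simpa [h1, h2] using hf.2 i hit
      · have h2 : ¬ (i + 1 ≤ i) := by omega
        have h3 : i + 1 - i = 1 := by omega
        have h4 : min 1 k = 1 := by omega
        simpa [h2, h3, h4, hg0] using hgs 0 (by omega)
      · have h1 : ¬ (i ≤ t) := by omega
        have h2 : ¬ (i + 1 ≤ t) := by omega
        have h3 : min (i - t) k = i - t := by omega
        have h4 : min (i + 1 - t) k = (i - t) + 1 := by omega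
        have h5 : i - t < k := by omega
        simpa [h1, h2, h3, h4] using hgs (i - t) h5
    · intro i hi
      simp [hi]
    · intro l' hlo' _
      have hll : l' = l := by
        rw [hlo] at hlo'
        exact (Option.some.inj hlo').symm
      subst hll
      refine ⟨t + k, by omega, le_refl _, ?_⟩
      have h1 : ¬ (t + k ≤ t) := by omega
      have h2 : min (t + k - t) k = k := by omega
      simpa [h1, h2] using hgl
  · obtain ⟨U, hUS2, hUleg⟩ := exists_succ st hnofalse
    refine ⟨fun i => if i ≤ t then f i else U, t + 1, ⟨by simp [hf.1], ?_⟩, by omega,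
      fun i hi => by simp [hi], fun l hlo hcond => absurd ⟨l, hlo, hcond⟩ hcase⟩
    intro i hi
    rcases lt_or_ge i t with hit | hit
    · have h1 : i ≤ t := by omega
      have h2 : i + 1 ≤ t := by omega
      simpa [h1, h2] using hf.2 i hit
    · have hteq : i = t := by omega
      subst hteq
      have h2 : ¬ (i + 1 ≤ i) := by omega
      simpa [h2] using ⟨hUleg, hUS2⟩

/-- If `start ⇒ false` is not derivable then `S` has a model. -/
lemma exists_model (st : Setup S w) (h : ¬ Derives S w (.initial [])) :
    ∃ σ : ℕ → Set P, IsModel σ S := by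
  classical
  obtain ⟨V₀, hV0S2, hV₀⟩ := exists_V0 st h
  -- list of eventuality literals
  have hEvfin : {l : Lit P | ∃ C, SNF.sometime C l ∈ S}.Finite := by
    refine Set.Finite.subset (litsFin st) ?_
    rintro l ⟨C, hC⟩
    exact mem_symsOf hC (mem_syms_sometime.mpr ⟨l, List.mem_cons_self, rfl⟩)
  set L : List (Lit P) := hEvfin.toFinset.toList with hLdef
  have hLm : ∀ x : Lit P, x ∈ L ↔ ∃ C, SNF.sometime C x ∈ S := by
    intro x
    rw [hLdef, Finset.mem_toList, Set.Finite.mem_toFinset]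
    exact Iff.rfl
  -- iterated extension
  have hstep : ∀ (p : {q : (ℕ → Set P) × ℕ // GoodPre S w V₀ q.1 q.2}) (s : ℕ),
      ∃ p' : {q : (ℕ → Set P) × ℕ // GoodPre S w V₀ q.1 q.2},
        p.1.2 < p'.1.2 ∧ (∀ i, i ≤ p.1.2 → p'.1.1 i = p.1.1 i) ∧
        (∀ l : Lit P, L[s % L.length]? = some l →
          (w l ∈ p.1.1 p.1.2 ∧ ¬ litSatV (p.1.1 p.1.2) l ∧ p.1.1 p.1.2 ∉ Bad S w l) →
          ∃ i, p.1.2 < i ∧ i ≤ p'.1.2 ∧ litSatV (p'.1.1 i) l) := by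
    rintro ⟨⟨f, t⟩, hgood⟩ s
    obtain ⟨f', t', hgood', hlt, hagree, hfair⟩ :=
      extend st hV0S2 hV₀ hgood (L[s % L.length]?)
    exact ⟨⟨(f', t'), hgood'⟩, hlt, hagree, hfair⟩
  set Seq : ℕ → {q : (ℕ → Set P) × ℕ // GoodPre S w V₀ q.1 q.2} := fun s =>
    Nat.rec ⟨(fun _ => V₀, 0), ⟨rfl, fun i hi => absurd hi (by omega)⟩⟩
      (fun s ih => (hstep ih s).choose) s with hSeqdef
  have hSeqsucc : ∀ s, Seq (s + 1) = (hstep (Seq s) s).choose := fun s => rfl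
  set τ : ℕ → ℕ := fun s => (Seq s).1.2 with hτdef
  have hτlt : ∀ s, τ s < τ (s + 1) := by
    intro s
    rw [hτdef]
    simp only [hSeqsucc s]
    exact (hstep (Seq s) s).choose_spec.1
  have hτmono : ∀ s s', s ≤ s' → τ s ≤ τ s' := by
    intro s s' hss
    induction s' with
    | zero =>
      have hs0 : s = 0 := by omega
      subst hs0
      exact le_refl _
    | succ u ih =>
      rcases Nat.lt_or_ge s (u + 1) with hu | hu
      · exact le_trans (ih (by omega)) (le_of_lt (hτlt u))
      · have hs1 : s = u + 1 := by omega
        subst hs1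
        exact le_refl _
  have hτs : ∀ s, s ≤ τ s := by
    intro s
    induction s with
    | zero => omega
    | succ u ih => have := hτlt u; omega
  have hagree : ∀ s s', s ≤ s' → ∀ i, i ≤ τ s → (Seq s').1.1 i = (Seq s).1.1 i := by
    intro s s' hss
    induction s' with
    | zero =>
      have : s = 0 := by omega
      subst this
      exact fun i _ => rfl
    | succ u ih =>
      intro i hi
      rcases Nat.lt_or_ge s (u + 1) with hu | hu
      · have h1 : (Seq (u + 1)).1.1 i = (Seq u).1.1 i := by
          rw [hSeqsucc u]
          exact (hstep (Seq u) u).choose_spec.2.1 i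
            (le_trans hi (hτmono s u (by omega)))
        rw [h1]
        exact ih (by omega) i hi
      · have : s = u + 1 := by omega
        subst this
        rfl
  set σ : ℕ → Set P := fun t => (Seq t).1.1 t with hσdef
  have hσgen : ∀ s i, i ≤ τ s → (Seq s).1.1 i = σ i := by
    intro s i hi
    have h1 : (Seq (max s i)).1.1 i = (Seq s).1.1 i :=
      hagree s (max s i) (le_max_left _ _) i hi
    have h2 : (Seq (max s i)).1.1 i = (Seq i).1.1 i :=
      hagree i (max s i) (le_max_right _ _) i (hτs i)
    rw [hσdef]
    rw [← h1, h2]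
  have hσ0 : σ 0 = V₀ := (Seq 0).2.1
  have hσlegal : ∀ t, legal S w (σ t) (σ (t + 1)) := by
    intro t
    have h1 : t < τ (t + 1) := lt_of_lt_of_le (by omega) (hτs (t + 1))
    have := ((Seq (t + 1)).2.2 t h1).1
    rwa [hσgen (t + 1) t (by omega), hσgen (t + 1) (t + 1) (hτs (t + 1))] at this
  have hσS2 : ∀ t, σ t ⊆ symsOf S := by
    intro t
    cases t with
    | zero => exact hσ0 ▸ hV0S2
    | succ u =>
      have h1 : u < τ (u + 1) := lt_of_lt_of_le (by omega) (hτs (u + 1))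
      have := ((Seq (u + 1)).2.2 u h1).2
      rwa [hσgen (u + 1) (u + 1) (hτs (u + 1))] at this
  have hσok0 : ∀ r, Derives S w (.initial r) → disjSatV (σ 0) r := by
    intro r hr
    rw [hσ0]
    exact hV₀ r hr
  have hσokS : ∀ t r, Derives S w (.step [] r) → disjSatV (σ (t + 1)) r :=
    fun t => legal_okS (hσlegal t)
  -- helper for case analysis on the augmentation disjunctions
  have hdisj1 : ∀ (V : Set P) (C : List (Lit P)) (l : Lit P) (p : P),
      disjSatV V (C.map Lit.negate ++ [l, posLit p]) → conjSatV V C →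
      ¬ litSatV V l → p ∈ V := by
    rintro V C l p ⟨x, hx, hs⟩ hC hl
    rcases List.mem_append.mp hx with hx | hx
    · rcases List.mem_map.mp hx with ⟨y, hy, rfl⟩
      exact absurd (hC y hy) ((litSatV_negate V y).mp hs)
    · rcases List.mem_cons.mp hx with rfl | hx
      · exact absurd hs hl
      · rcases List.mem_cons.mp hx with rfl | hx
        · exact litSatV_posLit.mp hs
        · exact absurd hx List.not_mem_nil
  have hdisj2 : ∀ (V : Set P) (C AU : List (Lit P)) (l : Lit P),
      disjSatV V (C.map Lit.negate ++ l :: AU.map Lit.negate) → conjSatV V C →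
      ¬ litSatV V l → conjSatV V AU → False := by
    rintro V C AU l ⟨x, hx, hs⟩ hC hl hAU
    rcases List.mem_append.mp hx with hx | hx
    · rcases List.mem_map.mp hx with ⟨y, hy, rfl⟩
      exact absurd (hC y hy) ((litSatV_negate V y).mp hs)
    · rcases List.mem_cons.mp hx with rfl | hx
      · exact absurd hs hl
      · rcases List.mem_map.mp hx with ⟨y, hy, rfl⟩
        exact absurd (hAU y hy) ((litSatV_negate V y).mp hs)
  -- the key pending invariant
  have hpending : ∀ (C : List (Lit P)) (l : Lit P), SNF.sometime C l ∈ S →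
      ∀ t₀, conjSatV (σ t₀) C → (∀ k, t₀ ≤ k → ¬ litSatV (σ k) l) →
      ∀ d, w l ∈ σ (t₀ + d) ∧ σ (t₀ + d) ∉ Bad S w l := by
    intro C l hCl t₀ htrig hnever d
    induction d with
    | zero =>
      have hnl : ¬ litSatV (σ t₀) l := hnever t₀ (le_refl _)
      have hdisj : disjSatV (σ t₀) (C.map Lit.negate ++ [l, posLit (w l)]) := by
        cases t₀ with
        | zero => exact hσok0 _ (Derives.assumption (st.aug_init C l hCl))
        | succ u => exact hσokS u _ (Derives.assumption (st.aug_step C l hCl))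
      constructor
      · simpa using hdisj1 _ _ _ _ hdisj htrig hnl
      · intro hBad
        obtain ⟨AU, hAU, hres1, hres2, _⟩ := temporalResolvents st hCl (by simpa using hBad)
        have hdisj' : disjSatV (σ t₀) (C.map Lit.negate ++ l :: AU.map Lit.negate) := by
          cases t₀ with
          | zero => exact hσok0 _ hres1
          | succ u => exact hσokS u _ hres2
        exact hdisj2 _ _ _ _ hdisj' htrig hnl (by simpa using hAU)
    | succ d ih =>
      obtain ⟨hwl, hnB⟩ := ih
      have hfired : conjSatV (σ (t₀ + d)) [posLit (w l)] := by
        intro x hx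
        rcases List.mem_cons.mp hx with rfl | hx
        · exact litSatV_posLit.mpr hwl
        · exact absurd hx List.not_mem_nil
      have hnl1 : ¬ litSatV (σ (t₀ + d + 1)) l := hnever (t₀ + d + 1) (by omega)
      have heq : t₀ + (d + 1) = t₀ + d + 1 := by omega
      rw [heq]
      constructor
      · have hdisj : disjSatV (σ (t₀ + d + 1)) [l, posLit (w l)] :=
          hσlegal (t₀ + d) _ _ (Derives.assumption (st.aug_w C l hCl)) hfired
        rcases hdisj with ⟨x, hx, hs⟩
        rcases List.mem_cons.mp hx with rfl | hx
        · exact absurd hs hnl1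
        · rcases List.mem_cons.mp hx with rfl | hx
          · exact litSatV_posLit.mp hs
          · exact absurd hx List.not_mem_nil
      · intro hBad
        obtain ⟨AU, hAU, _, _, hres3⟩ := temporalResolvents st hCl hBad
        have hdisj : disjSatV (σ (t₀ + d + 1)) (l :: AU.map Lit.negate) :=
          hσlegal (t₀ + d) _ _ hres3 hfired
        rcases hdisj with ⟨x, hx, hs⟩
        rcases List.mem_cons.mp hx with rfl | hx
        · exact absurd hs hnl1
        · rcases List.mem_map.mp hx with ⟨y, hy, rfl⟩
          exact absurd (hAU y hy) ((litSatV_negate _ y).mp hs)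
  -- eventual satisfaction
  have hfair : ∀ (C : List (Lit P)) (l : Lit P), SNF.sometime C l ∈ S →
      ∀ t₀, conjSatV (σ t₀) C → ∃ k, t₀ ≤ k ∧ litSatV (σ k) l := by
    intro C l hCl t₀ htrig
    by_contra hcon
    push_neg at hcon
    have hnever : ∀ k, t₀ ≤ k → ¬ litSatV (σ k) l := hcon
    have hlL : l ∈ L := (hLm l).mpr ⟨C, hCl⟩
    obtain ⟨⟨j, hj⟩, hjl⟩ := List.mem_iff_get.mp hlL
    have hLpos : 0 < L.length := by omega
    set s : ℕ := j + L.length * (t₀ + 1) with hsdef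
    have hsmod : s % L.length = j := by
      rw [hsdef, Nat.add_mul_mod_self_left, Nat.mod_eq_of_lt hj]
    have hst₀ : t₀ ≤ s := by
      have : t₀ + 1 ≤ L.length * (t₀ + 1) := Nat.le_mul_of_pos_left _ hLpos
      omega
    have hsome : L[s % L.length]? = some l := by
      rw [hsmod]
      rw [List.getElem?_eq_getElem hj]
      simpa using hjl
    have hτst₀ : t₀ ≤ τ s := le_trans hst₀ (hτs s)
    have hend : (Seq s).1.1 (τ s) = σ (τ s) := hσgen s (τ s) (le_refl _)
    obtain ⟨hw1, hw2⟩ := hpending C l hCl t₀ htrig hnever (τ s - t₀)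
    have heq2 : t₀ + (τ s - t₀) = τ s := by omega
    rw [heq2] at hw1 hw2
    have hspec := (hstep (Seq s) s).choose_spec.2.2 l hsome
    rw [← hSeqsucc s] at hspec
    have hcond : w l ∈ (Seq s).1.1 (Seq s).1.2 ∧ ¬ litSatV ((Seq s).1.1 (Seq s).1.2) l ∧
        (Seq s).1.1 (Seq s).1.2 ∉ Bad S w l := by
      have hτeq : (Seq s).1.2 = τ s := rfl
      rw [hτeq, hend]
      exact ⟨hw1, hnever _ hτst₀, hw2⟩
    obtain ⟨i, hi1, hi2, hi3⟩ := hspec hcond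
    have hi1' : τ s < i := hi1
    have hi2' : i ≤ τ (s + 1) := hi2
    have : (Seq (s + 1)).1.1 i = σ i := hσgen (s + 1) i hi2'
    rw [this] at hi3
    exact hnever i (by omega) hi3
  refine ⟨σ, ?_⟩
  intro i c hc
  cases c with
  | initial r =>
    intro hi
    subst hi
    exact hσok0 r (Derives.assumption hc)
  | step a b =>
    intro hconj
    exact hσlegal i a b (Derives.assumption hc) hconj
  | sometime C l =>
    intro hconj
    obtain ⟨k, hk, hl⟩ := hfair C l hc i hconj
    exact ⟨k, hk, hl⟩

end TRC
namespace TRC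

variable {P : Type}

lemma syms_finite (c : SNF P) : (SNF.syms c).Finite := by
  cases c with
  | initial rhs =>
    refine Set.Finite.subset (rhs.finite_toSet.image Lit.sym) ?_
    rintro p ⟨x, hx, rfl⟩
    exact ⟨x, hx, rfl⟩
  | step lhs rhs =>
    refine Set.Finite.subset ((lhs ++ rhs).finite_toSet.image Lit.sym) ?_
    rintro p ⟨x, hx, rfl⟩
    exact ⟨x, hx, rfl⟩
  | sometime lhs ev =>
    refine Set.Finite.subset ((ev :: lhs).finite_toSet.image Lit.sym) ?_
    rintro p ⟨x, hx, rfl⟩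
    exact ⟨x, hx, rfl⟩

lemma symsOf_finite {T : Set (SNF P)} (hT : T.Finite) : (symsOf T).Finite :=
  Set.Finite.biUnion hT (fun c _ => syms_finite c)

lemma aug_finite (S₀ : Set (SNF P)) (h₀ : S₀.Finite) (w : Lit P → P) :
    (Aug S₀ w).Finite := by
  have hB : {c : SNF P | ∃ l ∈ evLits S₀,
      c = SNF.step [posLit (w l)] [l, posLit (w l)]}.Finite := by
    refine Set.Finite.subset (Set.Finite.biUnion h₀ (fun c' _ =>
      (show ((fun c' : SNF P => match c' with
        | SNF.sometime _ l => {SNF.step [posLit (w l)] [l, posLit (w l)]}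
        | _ => (∅ : Set (SNF P))) c').Finite by
          cases c' <;> simp [Set.finite_singleton]))) ?_
    rintro c ⟨l, ⟨lhs, hmem⟩, rfl⟩
    exact Set.mem_biUnion hmem (by simp)
  have hC : {c : SNF P | ∃ lhs l, SNF.sometime lhs l ∈ S₀ ∧
      c = SNF.initial (lhs.map Lit.negate ++ [l, posLit (w l)])}.Finite := by
    refine Set.Finite.subset (Set.Finite.biUnion h₀ (fun c' _ =>
      (show ((fun c' : SNF P => match c' with
        | SNF.sometime lhs l => {SNF.initial (lhs.map Lit.negate ++ [l, posLit (w l)])}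
        | _ => (∅ : Set (SNF P))) c').Finite by
          cases c' <;> simp [Set.finite_singleton]))) ?_
    rintro c ⟨lhs, l, hmem, rfl⟩
    exact Set.mem_biUnion hmem (by simp)
  have hD : {c : SNF P | ∃ lhs l, SNF.sometime lhs l ∈ S₀ ∧
      c = SNF.step [] (lhs.map Lit.negate ++ [l, posLit (w l)])}.Finite := by
    refine Set.Finite.subset (Set.Finite.biUnion h₀ (fun c' _ =>
      (show ((fun c' : SNF P => match c' with
        | SNF.sometime lhs l => {SNF.step [] (lhs.map Lit.negate ++ [l, posLit (w l)])}
        | _ => (∅ : Set (SNF P))) c').Finite by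
          cases c' <;> simp [Set.finite_singleton]))) ?_
    rintro c ⟨lhs, l, hmem, rfl⟩
    exact Set.mem_biUnion hmem (by simp)
  exact ((h₀.union hB).union hC).union hD

lemma sometime_mem_aug {S₀ : Set (SNF P)} {w : Lit P → P} {C : List (Lit P)} {l : Lit P}
    (h : SNF.sometime C l ∈ Aug S₀ w) : SNF.sometime C l ∈ S₀ := by
  rcases h with ((h | h) | h) | h
  · exact h
  · rcases h with ⟨l', _, heq⟩
    exact absurd heq (by simp)
  · rcases h with ⟨lhs, l', _, heq⟩
    exact absurd heq (by simp)
  · rcases h with ⟨lhs, l', _, heq⟩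
    exact absurd heq (by simp)

lemma setup_aug (S₀ : Set (SNF P)) (h₀ : S₀.Finite) (w : Lit P → P) :
    Setup (Aug S₀ w) w := by
  have hw_mem : ∀ (C : List (Lit P)) (l : Lit P), SNF.sometime C l ∈ Aug S₀ w →
      SNF.step [posLit (w l)] [l, posLit (w l)] ∈ Aug S₀ w := by
    intro C l h
    have h0 : SNF.sometime C l ∈ S₀ := sometime_mem_aug h
    exact Or.inl (Or.inl (Or.inr ⟨l, ⟨C, h0⟩, rfl⟩))
  refine ⟨symsOf_finite (aug_finite S₀ h₀ w), ?_, ?_, ?_, ?_⟩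
  · intro C l h
    exact mem_symsOf (hw_mem C l h)
      (mem_syms_step.mpr ⟨posLit (w l), List.mem_append.mpr
        (Or.inl (List.mem_cons_self)), rfl⟩)
  · intro C l h
    exact Or.inl (Or.inr ⟨C, l, sometime_mem_aug h, rfl⟩)
  · intro C l h
    exact Or.inr ⟨C, l, sometime_mem_aug h, rfl⟩
  · intro C l h
    exact hw_mem C l h

end TRC
/-- completeness of clausal temporal resolution: if a well-behaved
augmented set of SNF clauses `Aug(S₀)` is unsatisfiable, then the clause
`start ⇒ false` is derivable from it in the temporal resolution calculus. -/
theorem stmt_14 {P : Type} [Countable P] (S₀ : Set (SNF P)) (h₀ : S₀.Finite)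
    (w : Lit P → P) (hw : FreshW S₀ w)
    (hwb : (¬ ∃ σ : ℕ → Set P, IsModel σ (Aug S₀ w)) ∨
      ∃ σ : ℕ → Set P, NormalModel σ S₀ w)
    (hunsat : ¬ ∃ σ : ℕ → Set P, IsModel σ (Aug S₀ w)) :
    Derives (Aug S₀ w) w (SNF.initial []) := by
  by_contra hder
  exact hunsat (TRC.exists_model (TRC.setup_aug S₀ h₀ w) hder)
end

section
/- Termination of the resolution procedure: let P be a finite set of n proposition symbols, and identify SNF clauses over P whose left-hand conjunctions have the same underlying set of literals and whose right-hand disjunctions have the same underlying set of literals. Then there are only finitely many SNF clauses over P up to this identification; consequently, any process that starts from a finite augmented SNF clause set over P and repeatedly adds SNF clauses over P that are new up to this identification (as the step and temporal resolution rules do, since they introduce no new proposition symbols after augmentation) must terminate. -/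
/-- Two lists of literals have the same underlying set of literals. -/
def listEquiv {P : Type} (A B : List (Lit P)) : Prop := ∀ l, l ∈ A ↔ l ∈ B

/-- Identification of SNF clauses: clauses of the same kind whose left-hand
conjunctions have the same underlying set of literals and whose right-hand
disjunctions have the same underlying set of literals. -/
def clauseEquiv {P : Type} : SNF P → SNF P → Prop
  | .initial A, .initial B => listEquiv A B
  | .step C A, .step D B => listEquiv C D ∧ listEquiv A B
  | .sometime C l, .sometime D l' => listEquiv C D ∧ l = l'
  | _, _ => False

/- The identification keeps exactly the kind of a clause and the sets of literals on its two
sides, and these range over a finite type once `P` is finite; a process adding clauses that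
are new up to identification would therefore give infinitely many distinct values there. -/

instance {P : Type} [Finite P] : Finite (Lit P) :=
  Finite.of_injective (fun l : Lit P => (l.pos, l.sym)) <| by rintro ⟨⟩ ⟨⟩ ⟨⟩; rfl

namespace SNF

variable {P : Type}

def literalSets : SNF P → Set (Lit P) ⊕ (Set (Lit P) × Set (Lit P)) ⊕ (Set (Lit P) × Lit P)
  | .initial A => .inl {l | l ∈ A}
  | .step C A => .inr (.inl ({l | l ∈ C}, {l | l ∈ A}))
  | .sometime C l => .inr (.inr ({l | l ∈ C}, l))

theorem clauseEquiv_iff_literalSets_eq {a b : SNF P} :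
    clauseEquiv a b ↔ a.literalSets = b.literalSets := by
  cases a <;> cases b <;> simp [literalSets, clauseEquiv, listEquiv, Set.ext_iff]

theorem finite_quot_clauseEquiv [Finite P] : Finite (Quot (@clauseEquiv P)) :=
  Finite.of_injective (Quot.lift literalSets fun _ _ => clauseEquiv_iff_literalSets_eq.1) <| by
    rintro ⟨a⟩ ⟨b⟩ h
    exact Quot.sound (clauseEquiv_iff_literalSets_eq.2 h)

end SNF

theorem Set.mem_of_lt_of_insert_succ {α : Type*} {T : ℕ → Set α} {c : ℕ → α}
    (hT : ∀ n, T (n + 1) = insert (c n) (T n)) {m n : ℕ} (hmn : m < n) : c m ∈ T n :=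
  have hmono : Monotone T := monotone_nat_of_le_succ fun k => hT k ▸ Set.subset_insert _ _
  Set.mem_of_subset_of_mem (hmono hmn) (hT m ▸ Set.mem_insert _ _)

/-- over a finite set `P` of proposition symbols there are only finitely
many SNF clauses up to the above identification; consequently any process starting
from a finite clause set over `P` which at each stage adds an SNF clause over `P` that
is new up to the identification must terminate (there is no such infinite process). -/
theorem stmt_15 {P : Type} [Fintype P] :
    Finite (Quot (@clauseEquiv P)) ∧
    ∀ T : ℕ → Set (SNF P), (T 0).Finite →
      ¬ (∀ n : ℕ, ∃ c : SNF P,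
          (∀ c' ∈ T n, ¬ clauseEquiv c c') ∧ T (n + 1) = insert c (T n)) := by
  refine ⟨SNF.finite_quot_clauseEquiv, fun T _ hfresh => ?_⟩
  choose c hnew hT using hfresh
  obtain ⟨m, n, hmn, hsets⟩ := Set.finite_univ.exists_lt_map_eq_of_forall_mem
    (f := fun n => (c n).literalSets) fun _ => Set.mem_univ _
  exact hnew n (c m) (Set.mem_of_lt_of_insert_succ hT hmn)
    (SNF.clauseEquiv_iff_literalSets_eq.2 hsets.symm)
end

section
/- Renaming preserves satisfiability (one step of the SNF translation): let R_1, …, R_m and A be PLTL formulae, x a proposition symbol, and σ a model with (σ,0) ⊨ (⋀_{h=1}^{m} □R_h) ∧ □(x ⇒ □A). Let y be a proposition symbol occurring in none of the R_h, in x, or in A. Then there is a model σ′ that agrees with σ on all proposition symbols other than y and satisfies (σ′,0) ⊨ (⋀_{h=1}^{m} □R_h) ∧ □(x ⇒ □y) ∧ □(y ⇒ A). -/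
/-! Let `y` hold at time `i` exactly when `x` has held at some time `j ≤ i`. Since `y` is fresh,
this changes neither the `R h` nor `A`. Then `x ⇒ □y` holds because `y` stays true from the
first `x` on, and `y ⇒ A` holds because an `x` at some `j ≤ i` yields `□A` from `j`. -/

namespace PLTL

variable {P : Type}

theorem sat_congr {σ σ' : ℕ → Set P} {A : PLTL P}
    (h : ∀ i, ∀ p ∈ syms A, p ∈ σ i ↔ p ∈ σ' i) (i : ℕ) : Sat σ A i ↔ Sat σ' A i := by
  induction A generalizing i with
  | tru | fls | start => rfl
  | atom p => exact h i p rfl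
  | neg A ih => exact not_congr (ih h i)
  | next A ih => exact ih h (i + 1)
  | evtl A ih => exact exists_congr fun k => and_congr_right' (ih h k)
  | alw A ih => exact forall_congr' fun j => imp_congr_right fun _ => ih h j
  | conj A B ihA ihB | disj A B ihA ihB | impl A B ihA ihB | untl A B ihA ihB
    | unls A B ihA ihB =>
    have hA := ihA fun i p hp => h i p (Or.inl hp)
    have hB := ihB fun i p hp => h i p (Or.inr hp)
    simp only [Sat, hA, hB]

theorem sat_congr_of_fresh {σ σ' : ℕ → Set P} {A : PLTL P} {y : P} (hyA : y ∉ syms A)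
    (h : ∀ i p, p ≠ y → (p ∈ σ i ↔ p ∈ σ' i)) (i : ℕ) : Sat σ A i ↔ Sat σ' A i :=
  sat_congr (fun i p hp => h i p (ne_of_mem_of_not_mem hp hyA)) i

def onceModel (σ : ℕ → Set P) (x y : P) : ℕ → Set P :=
  fun i => {p | p = y ∧ (∃ j ≤ i, x ∈ σ j) ∨ p ≠ y ∧ p ∈ σ i}

theorem mem_onceModel_of_ne {σ : ℕ → Set P} {x y p : P} (hp : p ≠ y) (i : ℕ) :
    p ∈ onceModel σ x y i ↔ p ∈ σ i := by
  simp [onceModel, hp]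

theorem mem_onceModel_self {σ : ℕ → Set P} {x y : P} (i : ℕ) :
    y ∈ onceModel σ x y i ↔ ∃ j ≤ i, x ∈ σ j := by
  simp [onceModel]

end PLTL

open PLTL in
theorem stmt_17_general {P : Type} (m : ℕ) (R : Fin m → PLTL P) (x : P)
    (A : PLTL P) (σ : ℕ → Set P) (y : P)
    (hyR : ∀ h : Fin m, y ∉ syms (R h)) (hyx : y ≠ x) (hyA : y ∉ syms A)
    (hσ : (∀ h : Fin m, Sat σ (alw (R h)) 0) ∧
          Sat σ (alw (impl (atom x) (alw A))) 0) :
    ∃ σ' : ℕ → Set P,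
      (∀ (i : ℕ) (p : P), p ≠ y → (p ∈ σ' i ↔ p ∈ σ i)) ∧
      (∀ h : Fin m, Sat σ' (alw (R h)) 0) ∧
      Sat σ' (alw (impl (atom x) (alw (atom y)))) 0 ∧
      Sat σ' (alw (impl (atom y) A)) 0 := by
  obtain ⟨hR, hxA⟩ := hσ
  have hagree : ∀ i p, p ≠ y → (p ∈ σ i ↔ p ∈ onceModel σ x y i) :=
    fun i _ hp => (mem_onceModel_of_ne hp i).symm
  refine ⟨onceModel σ x y, fun i _ hp => mem_onceModel_of_ne hp i, ?_, ?_, ?_⟩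
  · intro h j hj
    exact (sat_congr_of_fresh (hyR h) hagree j).mp (hR h j hj)
  · intro j _ hx k hk
    exact (mem_onceModel_self k).mpr ⟨j, hk, (mem_onceModel_of_ne hyx.symm j).mp hx⟩
  · intro j _ hy
    obtain ⟨k, hk, hxk⟩ := (mem_onceModel_self j).mp hy
    exact (sat_congr_of_fresh hyA hagree j).mp (hxA k k.zero_le hxk j hk)

open PLTL in
/-- renaming preserves satisfiability (one step of the SNF translation,
for the case x ⇒ □A with A renamed by a fresh proposition symbol y). -/
theorem stmt_17 {P : Type} [Countable P] (m : ℕ) (R : Fin m → PLTL P) (x : P)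
    (A : PLTL P) (σ : ℕ → Set P) (y : P)
    (hyR : ∀ h : Fin m, y ∉ syms (R h)) (hyx : y ≠ x) (hyA : y ∉ syms A)
    (hσ : (∀ h : Fin m, Sat σ (alw (R h)) 0) ∧
          Sat σ (alw (impl (atom x) (alw A))) 0) :
    ∃ σ' : ℕ → Set P,
      (∀ (i : ℕ) (p : P), p ≠ y → (p ∈ σ' i ↔ p ∈ σ i)) ∧
      (∀ h : Fin m, Sat σ' (alw (R h)) 0) ∧
      Sat σ' (alw (impl (atom x) (alw (atom y)))) 0 ∧
      Sat σ' (alw (impl (atom y) A)) 0 :=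
  stmt_17_general m R x A σ y hyR hyx hyA hσ
end
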